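/- arXiv:2003.00777 — 11 statements merged into one kernel-verified Lean document; each statement's English description precedes it below -/
import Mathlib

section
/- Let a < b be reals, K > 0, and let h : ℝ → ℝ be K-Lipschitz on [a,b]. Let x < y be reals and n ∈ ℕ, and suppose h crosses [x,y] at least n times on [a,b]. Then K ≥ n·(y−x)/(b−a). -/
/-- `h` crosses `[x,y]` at least `n` times on `[a,b]`. -/
def CrossesAtLeast (h : ℝ → ℝ) (a b x y : ℝ) (n : ℕ) : Prop :=
  ∃ u v : ℕ → ℝ,
    (∀ i < n, u i ∈ Set.Icc a b ∧ v i ∈ Set.Icc a b ∧ h (u i) = x ∧ h (v i) = y) ∧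
    (∀ i, i + 1 < n → max (u i) (v i) < min (u (i + 1)) (v (i + 1)))

theorem stmt_1 (a b K : ℝ) (hab : a < b) (hK : 0 < K) (h : ℝ → ℝ)
    (hlip : ∀ z ∈ Set.Icc a b, ∀ w ∈ Set.Icc a b, |h z - h w| ≤ K * |z - w|)
    (x y : ℝ) (hxy : x < y) (n : ℕ)
    (hcross : CrossesAtLeast h a b x y n) :
    K ≥ (n : ℝ) * (y - x) / (b - a) := by
  obtain ⟨u, v, hpt, hord⟩ := hcross
  have hba : (0:ℝ) < b - a := by linarith
  rcases Nat.eq_zero_or_pos n with rfl | hn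
  · simp only [Nat.cast_zero, zero_mul, zero_div]
    exact le_of_lt hK
  set M : ℕ → ℝ := fun i => max (u i) (v i) with hM
  set m : ℕ → ℝ := fun i => min (u i) (v i) with hm
  have key : ∀ i < n, y - x ≤ K * (M i - m i) := by
    intro i hi
    obtain ⟨hu, hv, hhu, hhv⟩ := hpt i hi
    have hl := hlip (v i) hv (u i) hu
    rw [hhv, hhu] at hl
    have habs : M i - m i = |v i - u i| := max_sub_min_eq_abs _ _
    calc y - x ≤ |y - x| := le_abs_self _
      _ ≤ K * |v i - u i| := hl
      _ = K * (M i - m i) := by rw [habs]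
  have hma : ∀ i < n, a ≤ m i ∧ M i ≤ b := by
    intro i hi
    obtain ⟨hu, hv, _, _⟩ := hpt i hi
    exact ⟨le_min hu.1 hv.1, max_le hu.2 hv.2⟩
  have hsum : ∀ k, 0 < k → k ≤ n → ∑ i ∈ Finset.range k, (M i - m i) ≤ M (k-1) - a := by
    intro k
    induction k with
    | zero => intro h0; exact absurd h0 (lt_irrefl 0)
    | succ k ih =>
      intro _ hkn
      rcases Nat.eq_zero_or_pos k with rfl | hk
      · simp only [zero_add, Finset.sum_range_one]
        have := (hma 0 (by omega)).1
        linarith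
      · rw [Finset.sum_range_succ]
        have h1 := ih hk (by omega)
        have h2 : M (k-1) < m k := by
          have := hord (k-1) (by omega)
          simpa [hM, hm, Nat.sub_add_cancel hk] using this
        simp only [Nat.add_sub_cancel]
        linarith
  have hS : (n:ℝ) * (y - x) ≤ K * (b - a) := by
    have h1 : ∑ i ∈ Finset.range n, (y - x) ≤ ∑ i ∈ Finset.range n, K * (M i - m i) :=
      Finset.sum_le_sum (fun i hi => key i (Finset.mem_range.mp hi))
    rw [Finset.sum_const, Finset.card_range, ← Finset.mul_sum] at h1
    have h2 := hsum n hn le_rfl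
    have h3 : M (n-1) ≤ b := (hma (n-1) (by omega)).2
    have h4 : K * (∑ i ∈ Finset.range n, (M i - m i)) ≤ K * (b - a) := by
      apply mul_le_mul_of_nonneg_left _ hK.le
      linarith
    calc (n:ℝ) * (y - x) = n • (y - x) := (nsmul_eq_mul _ _).symm
      _ ≤ _ := h1
      _ ≤ K * (b - a) := h4
  rw [ge_iff_le, div_le_iff₀ hba]
  linarith
end

section
/- Let a < b be reals, L > 0, and let f : ℝ → ℝ be L-Lipschitz on [a,b] with f([a,b]) ⊆ [a,b]. Suppose there exist reals x < y in [a,b], a constant C > 0, and a real ρ > 1 such that for every integer t ≥ 1 and every natural number n with n ≤ C·ρ^t, the t-fold iterate f^t crosses [x,y] at least n times on [a,b]. Then L ≥ ρ. -/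
theorem stmt_2 (a b L : ℝ) (hab : a < b) (hL : 0 < L) (f : ℝ → ℝ)
    (hlip : ∀ z ∈ Set.Icc a b, ∀ w ∈ Set.Icc a b, |f z - f w| ≤ L * |z - w|)
    (hmaps : Set.MapsTo f (Set.Icc a b) (Set.Icc a b))
    (x y : ℝ) (hx : x ∈ Set.Icc a b) (hy : y ∈ Set.Icc a b) (hxy : x < y)
    (C ρ : ℝ) (hC : 0 < C) (hρ : 1 < ρ)
    (hcross : ∀ t : ℕ, 1 ≤ t → ∀ n : ℕ, (n : ℝ) ≤ C * ρ ^ t →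
      CrossesAtLeast (f^[t]) a b x y n) :
    L ≥ ρ := by
  by_contra hcon
  push_neg at hcon
  have hyx : 0 < y - x := sub_pos.mpr hxy
  have hρ0 : (0:ℝ) < ρ := lt_trans one_pos hρ
  set K := (b - a) / (y - x) with hKdef
  -- iterates are L^t-Lipschitz on [a,b]
  have hiter : ∀ t : ℕ, ∀ z ∈ Set.Icc a b, ∀ w ∈ Set.Icc a b,
      |f^[t] z - f^[t] w| ≤ L ^ t * |z - w| := by
    intro t
    induction t with
    | zero => intro z hz w hw; simp
    | succ t ih =>
      intro z hz w hw
      rw [Function.iterate_succ_apply', Function.iterate_succ_apply']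
      calc |f (f^[t] z) - f (f^[t] w)| ≤ L * |f^[t] z - f^[t] w| :=
            hlip _ (hmaps.iterate t hz) _ (hmaps.iterate t hw)
        _ ≤ L * (L ^ t * |z - w|) := mul_le_mul_of_nonneg_left (ih z hz w hw) hL.le
        _ = L ^ (t + 1) * |z - w| := by ring
  -- n crossings force n * (y - x) ≤ L^t * (b - a)
  have hbound : ∀ t n : ℕ, CrossesAtLeast (f^[t]) a b x y n →
      (n : ℝ) * (y - x) ≤ L ^ t * (b - a) := by
    intro t n hcr
    obtain ⟨u, v, h1, h2⟩ := hcr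
    have hLt : (0:ℝ) < L ^ t := pow_pos hL t
    set δ := (y - x) / L ^ t with hδdef
    have hδpos : 0 < δ := div_pos hyx hLt
    have hgap : ∀ i < n, min (u i) (v i) + δ ≤ max (u i) (v i) := by
      intro i hi
      obtain ⟨hu, hv, hfu, hfv⟩ := h1 i hi
      have h3 := hiter t (u i) hu (v i) hv
      rw [hfu, hfv] at h3
      have h4 : y - x ≤ L ^ t * |u i - v i| := by
        calc y - x ≤ |x - y| := by rw [abs_sub_comm]; exact le_abs_self _
          _ ≤ L ^ t * |u i - v i| := h3
      have h5 : δ ≤ |u i - v i| := by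
        rw [hδdef, div_le_iff₀ hLt]
        linarith [h4]
      have h6 : max (u i) (v i) - min (u i) (v i) = |v i - u i| := max_sub_min_eq_abs _ _
      rw [abs_sub_comm] at h5
      linarith [h5]
    have hmin : ∀ i, i < n → a + (i : ℝ) * δ ≤ min (u i) (v i) := by
      intro i
      induction i with
      | zero =>
        intro hi
        obtain ⟨hu, hv, _, _⟩ := h1 0 hi
        simpa using le_min hu.1 hv.1
      | succ i ih =>
        intro hi
        have hi' : i < n := Nat.lt_of_succ_lt hi
        have hstep := h2 i hi
        have := hgap i hi'
        have := ih hi'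
        push_cast
        nlinarith
    rcases Nat.eq_zero_or_pos n with hn0 | hnpos
    · subst hn0
      simp only [Nat.cast_zero, zero_mul]
      have := pow_pos hL t
      nlinarith
    · obtain ⟨m, rfl⟩ := Nat.exists_eq_succ_of_ne_zero hnpos.ne'
      have hm : m < m + 1 := Nat.lt_succ_self m
      have h7 := hmin m hm
      have h8 := hgap m hm
      obtain ⟨hu, hv, _, _⟩ := h1 m hm
      have h9 : max (u m) (v m) ≤ b := max_le hu.2 hv.2
      have h10 : a + ((m : ℝ) + 1) * δ ≤ b := by nlinarith
      have h11 : ((m + 1 : ℕ) : ℝ) * δ ≤ b - a := by push_cast; linarith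
      rw [hδdef] at h11
      calc ((m + 1 : ℕ) : ℝ) * (y - x) = (((m + 1 : ℕ) : ℝ) * ((y - x) / L ^ t)) * L ^ t := by
            field_simp
        _ ≤ (b - a) * L ^ t := mul_le_mul_of_nonneg_right h11 hLt.le
        _ = L ^ t * (b - a) := mul_comm _ _
  -- for every t ≥ 1 : C ≤ (1/ρ)^t + K * (L/ρ)^t
  have hkey : ∀ t : ℕ, 1 ≤ t → C ≤ (1/ρ) ^ t + K * (L/ρ) ^ t := by
    intro t ht
    have hρt : (0:ℝ) < ρ ^ t := pow_pos hρ0 t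
    set n := ⌊C * ρ ^ t⌋₊ with hn
    have hCρ : (0:ℝ) ≤ C * ρ ^ t := by positivity
    have hle : (n : ℝ) ≤ C * ρ ^ t := Nat.floor_le hCρ
    have hgt : C * ρ ^ t < (n : ℝ) + 1 := Nat.lt_floor_add_one _
    have hb := hbound t n (hcross t ht n hle)
    -- n (y-x) ≤ L^t (b-a), and C ρ^t - 1 < n
    have h12 : (C * ρ ^ t - 1) * (y - x) ≤ L ^ t * (b - a) := by
      have : C * ρ ^ t - 1 ≤ (n : ℝ) := by linarith
      nlinarith
    have h13 : C * ρ ^ t ≤ 1 + K * L ^ t := by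
      have hdiv : C * ρ ^ t - 1 ≤ L ^ t * (b - a) / (y - x) := (le_div_iff₀ hyx).mpr h12
      have hKeq : K * L ^ t = L ^ t * (b - a) / (y - x) := by rw [hKdef]; ring
      linarith [hKeq ▸ hdiv]
    have h14 : C ≤ (1 + K * L ^ t) / ρ ^ t := by
      rw [le_div_iff₀ hρt]; linarith
    calc C ≤ (1 + K * L ^ t) / ρ ^ t := h14
      _ = (1/ρ) ^ t + K * (L/ρ) ^ t := by
          rw [div_pow, div_pow, one_pow]
          field_simp
  -- limit argument
  have hLρ : L / ρ < 1 := (div_lt_one hρ0).mpr hcon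
  have h1ρ : 1 / ρ < 1 := (div_lt_one hρ0).mpr hρ
  have ht1 : Filter.Tendsto (fun t : ℕ => (1/ρ) ^ t) Filter.atTop (nhds 0) :=
    tendsto_pow_atTop_nhds_zero_of_lt_one (by positivity) h1ρ
  have ht2 : Filter.Tendsto (fun t : ℕ => K * (L/ρ) ^ t) Filter.atTop (nhds 0) := by
    have := tendsto_pow_atTop_nhds_zero_of_lt_one (by positivity : (0:ℝ) ≤ L/ρ) hLρ
    simpa using this.const_mul K
  have htot : Filter.Tendsto (fun t : ℕ => (1/ρ) ^ t + K * (L/ρ) ^ t)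
      Filter.atTop (nhds 0) := by simpa using ht1.add ht2
  have hev : ∀ᶠ t : ℕ in Filter.atTop, (1/ρ) ^ t + K * (L/ρ) ^ t < C :=
    htot.eventually_lt_const hC
  obtain ⟨t, ht⟩ := (hev.and (Filter.eventually_ge_atTop 1)).exists
  exact absurd (hkey t ht.2) (not_le.mpr ht.1)
end

section
/- Let x < y be reals, K > 0, and let h : ℝ → ℝ be continuous and K-Lipschitz on an interval [u₁,u₂] with u₁ < u₂. Suppose that either (i) h(u₁) ≤ (x+y)/2, h(u₂) ≤ (x+y)/2, and there exists w ∈ [u₁,u₂] with h(w) = y, or (ii) h(u₁) ≥ (x+y)/2, h(u₂) ≥ (x+y)/2, and there exists w ∈ [u₁,u₂] with h(w) = x. Then ∫_{u₁}^{u₂} |h(z) − (x+y)/2| dz ≥ (y−x)²/(8K). -/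
open MeasureTheory

lemma aux3 (x y K u₁ u₂ : ℝ) (hxy : x < y) (hK : 0 < K) (hu : u₁ < u₂)
    (h : ℝ → ℝ) (hcont : ContinuousOn h (Set.Icc u₁ u₂))
    (hlip : ∀ z ∈ Set.Icc u₁ u₂, ∀ w ∈ Set.Icc u₁ u₂, |h z - h w| ≤ K * |z - w|)
    (h2 : h u₂ ≤ (x + y) / 2) (hw : ∃ w ∈ Set.Icc u₁ u₂, h w = y) :
    (y - x) ^ 2 / (8 * K) ≤ ∫ z in Set.Icc u₁ u₂, |h z - (x + y) / 2| := by
  obtain ⟨w, hwI, hhw⟩ := hw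
  set m : ℝ := (x + y) / 2 with hm
  set δ : ℝ := (y - x) / 2 with hδdef
  have hδ : 0 < δ := by simp [hδdef]; linarith
  set a : ℝ := δ / K with hadef
  have ha : 0 < a := div_pos hδ hK
  have hu₂I : u₂ ∈ Set.Icc u₁ u₂ := ⟨le_of_lt hu, le_refl _⟩
  have hwa : w + a ≤ u₂ := by
    have hl := hlip u₂ hu₂I w hwI
    have h1 : δ ≤ |h u₂ - h w| := by
      rw [abs_sub_comm, hhw]
      have : δ ≤ y - h u₂ := by simp [hδdef, hm] at *; linarith
      exact this.trans (le_abs_self _)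
    have h2' : |u₂ - w| = u₂ - w := abs_of_nonneg (by linarith [hwI.2])
    rw [h2'] at hl
    have : δ ≤ K * (u₂ - w) := h1.trans hl
    have h3 : δ / K ≤ u₂ - w := (div_le_iff₀ hK).mpr (by linarith)
    simpa [hadef] using (by linarith : w + δ / K ≤ u₂)
  have hsub : Set.Icc w (w + a) ⊆ Set.Icc u₁ u₂ := Set.Icc_subset_Icc hwI.1 hwa
  have hf_int : IntegrableOn (fun z => |h z - m|) (Set.Icc u₁ u₂) :=
    ((hcont.sub continuousOn_const).abs).integrableOn_compact isCompact_Icc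
  have step1 : ∫ z in Set.Icc w (w + a), (δ - K * (z - w)) ≤
      ∫ z in Set.Icc w (w + a), |h z - m| := by
    apply setIntegral_mono_on
    · exact ((continuous_const.sub (continuous_const.mul (continuous_id.sub continuous_const))).continuousOn.integrableOn_compact isCompact_Icc)
    · exact hf_int.mono_set hsub
    · exact measurableSet_Icc
    · intro z hz
      have hzI := hsub hz
      have hl := hlip z hzI w hwI
      have habs : |z - w| = z - w := abs_of_nonneg (by linarith [hz.1])
      rw [habs] at hl
      have : h w - h z ≤ K * (z - w) := (le_abs_self _).trans (by rw [abs_sub_comm]; exact hl)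
      have hzm : δ - K * (z - w) ≤ h z - m := by
        have : h w - m = δ := by rw [hhw]; simp [hm, hδdef]; ring
        linarith
      exact hzm.trans (le_abs_self _)
  have step2 : ∫ z in Set.Icc w (w + a), |h z - m| ≤ ∫ z in Set.Icc u₁ u₂, |h z - m| := by
    apply setIntegral_mono_set hf_int
    · exact Filter.Eventually.of_forall fun z => abs_nonneg _
    · exact HasSubset.Subset.eventuallyLE hsub
  have hval : ∫ z in Set.Icc w (w + a), (δ - K * (z - w)) = (y - x) ^ 2 / (8 * K) := by
    rw [integral_Icc_eq_integral_Ioc, ← intervalIntegral.integral_of_le (by linarith : w ≤ w + a)]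
    have := intervalIntegral.integral_comp_sub_right (a := w) (b := w + a) (fun t => δ - K * t) w
    rw [this]
    simp only [sub_self, add_sub_cancel_left]
    have hint : IntervalIntegrable (fun t : ℝ => K * t) volume 0 a :=
      (continuous_const.mul continuous_id).intervalIntegrable _ _
    rw [intervalIntegral.integral_sub intervalIntegrable_const hint,
      intervalIntegral.integral_const_mul, integral_id,
      intervalIntegral.integral_const]
    simp only [smul_eq_mul, hadef, hδdef]
    field_simp
    ring
  linarith [step1, step2, hval.ge, hval.le]

theorem stmt_3 (x y K u₁ u₂ : ℝ) (hxy : x < y) (hK : 0 < K) (hu : u₁ < u₂)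
    (h : ℝ → ℝ) (hcont : ContinuousOn h (Set.Icc u₁ u₂))
    (hlip : ∀ z ∈ Set.Icc u₁ u₂, ∀ w ∈ Set.Icc u₁ u₂, |h z - h w| ≤ K * |z - w|)
    (hcase :
      (h u₁ ≤ (x + y) / 2 ∧ h u₂ ≤ (x + y) / 2 ∧ ∃ w ∈ Set.Icc u₁ u₂, h w = y) ∨
      (h u₁ ≥ (x + y) / 2 ∧ h u₂ ≥ (x + y) / 2 ∧ ∃ w ∈ Set.Icc u₁ u₂, h w = x)) :
    (y - x) ^ 2 / (8 * K) ≤ ∫ z in Set.Icc u₁ u₂, |h z - (x + y) / 2| := by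
  rcases hcase with ⟨_, h2, hw⟩ | ⟨_, h2, hw⟩
  · exact aux3 x y K u₁ u₂ hxy hK hu h hcont hlip h2 hw
  · have key := aux3 x y K u₁ u₂ hxy hK hu (fun z => x + y - h z)
      (continuousOn_const.sub hcont)
      (fun z hz w hw' => by
        simpa [abs_sub_comm, sub_sub_sub_cancel_left] using hlip w hw' z hz)
      (by simp; linarith)
      (by obtain ⟨w, hwI, hhw⟩ := hw; exact ⟨w, hwI, by show x + y - h w = y; rw [hhw]; ring⟩)
    have : ∀ z, |x + y - h z - (x + y) / 2| = |h z - (x + y) / 2| := by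
      intro z; rw [abs_sub_comm]; congr 1; ring
    simpa [this] using key
end

section
/- Let a ≤ b be reals, N ≥ 1 and m ≥ 1 natural numbers. Let U_1, …, U_N be nonempty subintervals of [a,b] such that every point of U_i is strictly less than every point of U_{i+1}, for 1 ≤ i < N. Let ε_1, …, ε_N ∈ {0,1} be alternating, i.e., ε_{i+1} = 1 − ε_i for 1 ≤ i < N. Let G : [a,b] → {0,1} be a function for which there exists a partition of [a,b] into at most m pairwise disjoint intervals whose union is [a,b], on each of which G is constant. Then 2·#{i ∈ {1,…,N} : G(z) ≠ ε_i for every z ∈ U_i} ≥ N − 2m. -/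
theorem stmt_4 (a b : ℝ) (hab : a ≤ b) (N m : ℕ) (hN : 1 ≤ N) (hm : 1 ≤ m)
    (U : ℕ → Set ℝ)
    (hUsub : ∀ i < N, U i ⊆ Set.Icc a b)
    (hUne : ∀ i < N, (U i).Nonempty)
    (hUord : ∀ i < N, (U i).OrdConnected)
    (hsep : ∀ i, i + 1 < N → ∀ z ∈ U i, ∀ w ∈ U (i + 1), z < w)
    (ε : ℕ → ℝ) (hε01 : ∀ i < N, ε i = 0 ∨ ε i = 1)
    (halt : ∀ i, i + 1 < N → ε (i + 1) = 1 - ε i)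
    (G : ℝ → ℝ) (hG01 : ∀ z ∈ Set.Icc a b, G z = 0 ∨ G z = 1)
    (V : Fin m → Set ℝ) (hVord : ∀ k, (V k).OrdConnected)
    (hVdisj : ∀ k l, k ≠ l → Disjoint (V k) (V l))
    (hVunion : (⋃ k, V k) = Set.Icc a b)
    (hGconst : ∀ k, ∀ z ∈ V k, ∀ w ∈ V k, G z = G w) :
    (N : ℤ) - 2 * (m : ℤ) ≤
      2 * ({i | i < N ∧ ∀ z ∈ U i, G z ≠ ε i}.ncard : ℤ) := by
  classical
  set S : Finset ℕ := (Finset.range N).filter (fun i => ∃ z ∈ U i, G z = ε i) with hSdef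
  have hSsub : S ⊆ Finset.range N := Finset.filter_subset _ _
  have hScard_le : S.card ≤ N := by
    simpa using Finset.card_le_card hSsub
  -- choose witnesses z i ∈ U i with G (z i) = ε i for i ∈ S
  have hz' : ∀ i : ℕ, ∃ zz : ℝ, i ∈ S → zz ∈ U i ∧ G zz = ε i := by
    intro i
    by_cases h : i ∈ S
    · obtain ⟨zz, hz1, hz2⟩ := (Finset.mem_filter.mp h).2
      exact ⟨zz, fun _ => ⟨hz1, hz2⟩⟩
    · exact ⟨0, fun h' => absurd h' h⟩
  choose z hz using hz'
  have hiN : ∀ i ∈ S, i < N := fun i hi => Finset.mem_range.mp (hSsub hi)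
  -- choose k i with z i ∈ V (k i)
  have hk' : ∀ i : ℕ, ∃ k : Fin m, i ∈ S → z i ∈ V k := by
    intro i
    by_cases h : i ∈ S
    · have h1 : z i ∈ Set.Icc a b := hUsub i (hiN i h) (hz i h).1
      rw [← hVunion] at h1
      obtain ⟨k, hk⟩ := Set.mem_iUnion.mp h1
      exact ⟨k, fun _ => hk⟩
    · exact ⟨⟨0, hm⟩, fun h' => absurd h' h⟩
  choose k hk using hk'
  -- points of U i are below points of U j for i < j
  have hlt : ∀ j, j < N → ∀ i, i < j → ∀ x ∈ U i, ∀ y ∈ U j, x < y := by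
    intro j
    induction j with
    | zero => intro _ i hij; omega
    | succ n ih =>
      intro hjN i hij x hx y hy
      rcases Nat.lt_succ_iff_lt_or_eq.mp hij with h | h
      · obtain ⟨w, hw⟩ := hUne n (by omega)
        exact lt_trans (ih (by omega) i h x hx w hw) (hsep n hjN w hw y hy)
      · subst h; exact hsep i hjN x hx y hy
  -- adjacent ε's differ
  have hεne : ∀ i, i + 1 < N → ε i ≠ ε (i + 1) := by
    intro i hi h
    have h1 := halt i hi
    rcases hε01 i (by omega) with h0 | h0 <;> rw [h1, h0] at h <;> norm_num at h
  -- same V implies same ε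
  have heq : ∀ i ∈ S, ∀ j ∈ S, k i = k j → ε i = ε j := by
    intro i hi j hj hkij
    have h1 := hGconst (k i) (z i) (hk i hi) (z j) (hkij ▸ hk j hj)
    rw [(hz i hi).2, (hz j hj).2] at h1
    exact h1
  -- key contiguity fact
  have hkey : ∀ i ∈ S, ∀ j ∈ S, i < j → (i + 1) ∈ S → k i = k j → False := by
    intro i hi j hj hij hi1 hkij
    have hjN' := hiN j hj
    have hi1N : i + 1 < N := by
      have := hiN (i+1) hi1; omega
    rcases eq_or_lt_of_le (Nat.succ_le_of_lt hij) with h | h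
    · have h' := heq i hi j hj hkij
      rw [← h] at h'
      exact hεne i hi1N h'
    · -- i + 1 < j : z (i+1) lies between z i and z j, hence in V (k i)
      have hz1 : z i < z (i+1) :=
        hlt (i+1) hi1N i (by omega) (z i) (hz i hi).1 (z (i+1)) (hz (i+1) hi1).1
      have hz2 : z (i+1) < z j :=
        hlt j hjN' (i+1) h (z (i+1)) (hz (i+1) hi1).1 (z j) (hz j hj).1
      have hmem : z (i+1) ∈ V (k i) :=
        (hVord (k i)).out (hk i hi) (hkij ▸ hk j hj) ⟨hz1.le, hz2.le⟩
      have hkk : k (i+1) = k i := by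
        by_contra hne
        exact Set.disjoint_left.mp (hVdisj _ _ hne) (hk (i+1) hi1) hmem
      exact hεne i hi1N (heq i hi (i+1) hi1 hkk.symm)
  -- the injection
  have hinj : S.card ≤ ((Finset.range N \ S).disjSum (Finset.univ : Finset (Fin m))).card := by
    apply Finset.card_le_card_of_injOn
      (fun i => if i + 1 < N ∧ i + 1 ∉ S then Sum.inl (i + 1) else Sum.inr (k i))
    · intro i hi
      by_cases h : i + 1 < N ∧ i + 1 ∉ S
      · simp only [h, if_true]
        exact Finset.inl_mem_disjSum.mpr (Finset.mem_sdiff.mpr ⟨Finset.mem_range.mpr h.1, h.2⟩)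
      · simp only [h, if_false]
        exact Finset.inr_mem_disjSum.mpr (Finset.mem_univ _)
    · intro i hi j hj hΦ
      by_contra hne
      by_cases h1 : i + 1 < N ∧ i + 1 ∉ S <;> by_cases h2 : j + 1 < N ∧ j + 1 ∉ S <;>
        simp only [h1, h2, if_true, if_false] at hΦ
      · have h' := Sum.inl.inj hΦ
        omega
      · simp at hΦ
      · simp at hΦ
      · have hkij : k i = k j := Sum.inr.inj hΦ
        rcases lt_trichotomy i j with h | h | h
        · have hi1 : i + 1 ∈ S := by
            have : i + 1 < N := by have := hiN j hj; omega
            tauto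
          exact hkey i hi j hj h hi1 hkij
        · exact hne h
        · have hj1 : j + 1 ∈ S := by
            have : j + 1 < N := by have := hiN i hi; omega
            tauto
          exact hkey j hj i hi h hj1 hkij.symm
  have hcard2 : ((Finset.range N \ S).disjSum (Finset.univ : Finset (Fin m))).card
      = (N - S.card) + m := by
    rw [Finset.card_disjSum, Finset.card_sdiff_of_subset hSsub]
    simp
  -- identify the bad set with a finset
  have hset : {i | i < N ∧ ∀ z ∈ U i, G z ≠ ε i} = ↑(Finset.range N \ S) := by
    ext i
    simp only [Set.mem_setOf_eq, Finset.coe_sdiff, Set.mem_diff, Finset.coe_filter,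
      Finset.mem_coe, Finset.mem_range, hSdef, Finset.mem_filter, Set.mem_setOf_eq]
    constructor
    · rintro ⟨h1, h2⟩
      refine ⟨h1, ?_⟩
      rintro ⟨-, zz, hz1, hz2⟩
      exact h2 zz hz1 hz2
    · rintro ⟨h1, h2⟩
      refine ⟨h1, fun zz hz1 hz2 => h2 ⟨h1, zz, hz1, hz2⟩⟩
  rw [hset, Set.ncard_coe_finset]
  have h3 : (Finset.range N \ S).card = N - S.card := by
    rw [Finset.card_sdiff_of_subset hSsub]; simp
  rw [hcard2] at hinj
  omega
end

section
/- Let a < b be reals and ρ > 1. Let f : ℝ → ℝ be continuous and ρ-Lipschitz on [a,b] with f([a,b]) ⊆ [a,b]. Let x < y be reals in [a,b], let t ≥ 1 be an integer, and let n ∈ ℕ with n ≥ ρ^t be such that the t-fold iterate f^t crosses [x,y] at least n times on [a,b]. Let g : ℝ → ℝ be piecewise affine with at most N pieces on [a,b], where 8·N ≤ ρ^t. Then ∫_a^b |f^t(z) − g(z)| dz ≥ (y−x)²/32. -/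
open Set MeasureTheory

/-- First/last hit lemma: low band. -/
lemma low' (G : ℝ → ℝ) (hG : Continuous G) (c d x y r : ℝ) (hcd : c ≤ d)
    (hr1 : x ≤ r) (hr2 : r ≤ y)
    (hends : (G c = x ∧ G d = y) ∨ (G c = y ∧ G d = x)) :
    ∃ p q, c ≤ p ∧ p ≤ q ∧ q ≤ d ∧
      ((G p = x ∧ G q = r) ∨ (G p = r ∧ G q = x)) ∧
      ∀ z ∈ Set.Icc p q, G z ≤ r := by
  rcases hends with ⟨hc, hd⟩ | ⟨hc, hd⟩
  · -- G c = x, G d = y : first hit of r from the left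
    have hrmem : r ∈ Icc (G c) (G d) := by rw [hc, hd]; exact ⟨hr1, hr2⟩
    obtain ⟨q0, hq0mem, hq0⟩ := intermediate_value_Icc hcd hG.continuousOn hrmem
    set S : Set ℝ := Icc c d ∩ G ⁻¹' {r} with hS
    have hSclosed : IsClosed S := isClosed_Icc.inter (isClosed_singleton.preimage hG)
    have hSne : S.Nonempty := ⟨q0, hq0mem, hq0⟩
    have hSbdd : BddBelow S := bddBelow_Icc.mono inter_subset_left
    set q := sInf S with hq
    have hqS : q ∈ S := hSclosed.csInf_mem hSne hSbdd
    refine ⟨c, q, le_refl c, hqS.1.1, hqS.1.2, Or.inl ⟨hc, hqS.2⟩, ?_⟩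
    intro z hz
    by_contra hgt
    push_neg at hgt
    have hzd : z ≤ d := hz.2.trans hqS.1.2
    have : r ∈ Icc (G c) (G z) := by rw [hc]; exact ⟨hr1, hgt.le⟩
    obtain ⟨w, hwmem, hw⟩ := intermediate_value_Icc hz.1 hG.continuousOn this
    have hwS : w ∈ S := ⟨⟨hwmem.1, hwmem.2.trans hzd⟩, hw⟩
    have : q ≤ w := csInf_le hSbdd hwS
    have hwz : w = z := le_antisymm hwmem.2 (hz.2.trans this)
    rw [hwz] at hw
    have : G z = r := hw
    linarith
  · -- G c = y, G d = x : last hit of r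
    have hrmem : r ∈ Icc (G d) (G c) := by rw [hc, hd]; exact ⟨hr1, hr2⟩
    obtain ⟨q0, hq0mem, hq0⟩ := intermediate_value_Icc' hcd hG.continuousOn hrmem
    set S : Set ℝ := Icc c d ∩ G ⁻¹' {r} with hS
    have hSclosed : IsClosed S := isClosed_Icc.inter (isClosed_singleton.preimage hG)
    have hSne : S.Nonempty := ⟨q0, hq0mem, hq0⟩
    have hSbdd : BddAbove S := bddAbove_Icc.mono inter_subset_left
    set p := sSup S with hp
    have hpS : p ∈ S := hSclosed.csSup_mem hSne hSbdd
    refine ⟨p, d, hpS.1.1, hpS.1.2, le_refl d, Or.inr ⟨hpS.2, hd⟩, ?_⟩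
    intro z hz
    by_contra hgt
    push_neg at hgt
    have hcz : c ≤ z := hpS.1.1.trans hz.1
    have : r ∈ Icc (G d) (G z) := by rw [hd]; exact ⟨hr1, hgt.le⟩
    obtain ⟨w, hwmem, hw⟩ := intermediate_value_Icc' hz.2 hG.continuousOn this
    have hwS : w ∈ S := ⟨⟨hcz.trans hwmem.1, hwmem.2⟩, hw⟩
    have : w ≤ p := le_csSup hSbdd hwS
    have hwz : w = z := le_antisymm (this.trans hz.1) hwmem.1
    rw [hwz] at hw
    have : G z = r := hw
    linarith

/-- High band version. -/
lemma high' (G : ℝ → ℝ) (hG : Continuous G) (c d x y r : ℝ) (hcd : c ≤ d)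
    (hr1 : x ≤ r) (hr2 : r ≤ y)
    (hends : (G c = x ∧ G d = y) ∨ (G c = y ∧ G d = x)) :
    ∃ p q, c ≤ p ∧ p ≤ q ∧ q ≤ d ∧
      ((G p = y ∧ G q = r) ∨ (G p = r ∧ G q = y)) ∧
      ∀ z ∈ Set.Icc p q, r ≤ G z := by
  have hends' : ((fun z => -G z) c = -y ∧ (fun z => -G z) d = -x) ∨
      ((fun z => -G z) c = -x ∧ (fun z => -G z) d = -y) := by
    rcases hends with ⟨hc, hd⟩ | ⟨hc, hd⟩
    · exact Or.inr ⟨by simp [hc], by simp [hd]⟩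
    · exact Or.inl ⟨by simp [hc], by simp [hd]⟩
  obtain ⟨p, q, h1, h2, h3, h4, h5⟩ :=
    low' (fun z => -G z) hG.neg c d (-y) (-x) (-r) hcd (by linarith) (by linarith) hends'
  refine ⟨p, q, h1, h2, h3, ?_, fun z hz => by have := h5 z hz; simpa using by linarith [h5 z hz]⟩
  rcases h4 with ⟨ha, hb⟩ | ⟨ha, hb⟩
  · exact Or.inl ⟨by simpa using congrArg Neg.neg ha, by simpa using congrArg Neg.neg hb⟩
  · exact Or.inr ⟨by simpa using congrArg Neg.neg ha, by simpa using congrArg Neg.neg hb⟩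

lemma affine_le_max (α β z1 z2 z3 : ℝ) (h12 : z1 ≤ z2) (h23 : z2 ≤ z3) :
    α * z2 + β ≤ max (α * z1 + β) (α * z3 + β) := by
  rcases le_total 0 α with hα | hα
  · exact le_max_of_le_right (by nlinarith)
  · exact le_max_of_le_left (by nlinarith)

lemma affine_min_le (α β z1 z2 z3 : ℝ) (h12 : z1 ≤ z2) (h23 : z2 ≤ z3) :
    min (α * z1 + β) (α * z3 + β) ≤ α * z2 + β := by
  rcases le_total 0 α with hα | hα
  · exact min_le_of_left_le (by nlinarith)
  · exact min_le_of_right_le (by nlinarith)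

theorem stmt_6 (a b ρ : ℝ) (hab : a < b) (hρ : 1 < ρ) (f : ℝ → ℝ)
    (hcont : ContinuousOn f (Set.Icc a b))
    (hlip : ∀ z ∈ Set.Icc a b, ∀ w ∈ Set.Icc a b, |f z - f w| ≤ ρ * |z - w|)
    (hmaps : Set.MapsTo f (Set.Icc a b) (Set.Icc a b))
    (x y : ℝ) (hxy : x < y) (hx : x ∈ Set.Icc a b) (hy : y ∈ Set.Icc a b)
    (t : ℕ) (ht : 1 ≤ t) (n : ℕ) (hn : ρ ^ t ≤ (n : ℝ))
    (hcross : CrossesAtLeast (f^[t]) a b x y n)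
    (g : ℝ → ℝ) (N : ℕ) (pts : ℕ → ℝ) (hp0 : pts 0 = a) (hpN : pts N = b)
    (hmono : ∀ k < N, pts k ≤ pts (k + 1))
    (haffine : ∀ k < N, ∃ α β : ℝ,
      ∀ z ∈ Set.Icc (pts k) (pts (k + 1)), g z = α * z + β)
    (hN : 8 * (N : ℝ) ≤ ρ ^ t) :
    (y - x) ^ 2 / 32 ≤ ∫ z in Set.Icc a b, |f^[t] z - g z| := by
  classical
  have hN1 : 1 ≤ N := by
    by_contra h
    push_neg at h
    have hN0 : N = 0 := by omega
    rw [hN0, hp0] at hpN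
    linarith
  set m := y - x with hm_def
  have hm : 0 < m := by rw [hm_def]; linarith
  have hρ0 : (0:ℝ) ≤ ρ := by linarith
  have hL0 : (0:ℝ) < ρ ^ t := pow_pos (by linarith) t
  set μ := m / 4 with hμdef
  have hμ : 0 < μ := by rw [hμdef]; linarith
  set mid := (x + y) / 2 with hmid_def
  -- iterate facts
  have hmapsI : Set.MapsTo f^[t] (Set.Icc a b) (Set.Icc a b) := hmaps.iterate t
  have hlipI : ∀ z ∈ Set.Icc a b, ∀ w ∈ Set.Icc a b,
      |f^[t] z - f^[t] w| ≤ ρ ^ t * |z - w| := by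
    have key : ∀ s : ℕ, ∀ z ∈ Set.Icc a b, ∀ w ∈ Set.Icc a b,
        |f^[s] z - f^[s] w| ≤ ρ ^ s * |z - w| := by
      intro s
      induction s with
      | zero => intro z _ w _; simp
      | succ s ih =>
        intro z hz w hw
        rw [Function.iterate_succ_apply, Function.iterate_succ_apply]
        calc |f^[s] (f z) - f^[s] (f w)| ≤ ρ ^ s * |f z - f w| :=
              ih _ (hmaps hz) _ (hmaps hw)
          _ ≤ ρ ^ s * (ρ * |z - w|) :=
              mul_le_mul_of_nonneg_left (hlip z hz w hw) (pow_nonneg hρ0 s)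
          _ = ρ ^ (s + 1) * |z - w| := by ring
    exact key t
  have hcontI : ContinuousOn f^[t] (Set.Icc a b) := by
    have key : ∀ s : ℕ, ContinuousOn f^[s] (Set.Icc a b) := by
      intro s
      induction s with
      | zero => simpa using continuousOn_id
      | succ s ih =>
        rw [Function.iterate_succ]
        exact ih.comp hcont hmaps
    exact key t
  -- clamped iterate
  set cl : ℝ → ℝ := fun z => max a (min b z) with hcl_def
  have hclcont : Continuous cl := continuous_const.max (continuous_const.min continuous_id)
  have hclmem : ∀ z, cl z ∈ Set.Icc a b :=
    fun z => ⟨le_max_left _ _, max_le hab.le (min_le_left _ _)⟩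
  have hclid : ∀ z ∈ Set.Icc a b, cl z = z := by
    intro z hz
    show max a (min b z) = z
    rw [min_eq_right hz.2, max_eq_right hz.1]
  set G : ℝ → ℝ := fun z => f^[t] (cl z) with hG_def
  have hGcont : Continuous G := hcontI.comp_continuous hclcont hclmem
  have hGF : ∀ z ∈ Set.Icc a b, G z = f^[t] z := by
    intro z hz
    show f^[t] (cl z) = f^[t] z
    rw [hclid z hz]
  -- crossing data
  obtain ⟨u, v, huv, hsep⟩ := hcross
  set ci : ℕ → ℝ := fun i => min (u i) (v i) with hci_def
  set di : ℕ → ℝ := fun i => max (u i) (v i) with hdi_def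
  have hcd : ∀ i, ci i ≤ di i := fun i => min_le_max
  have hmemI : ∀ i < n, a ≤ ci i ∧ di i ≤ b := by
    intro i hi
    obtain ⟨hu, hv, _, _⟩ := huv i hi
    exact ⟨le_min hu.1 hv.1, max_le hu.2 hv.2⟩
  have horder : ∀ i j, i < j → j < n → di i < ci j := by
    intro i j hij hjn
    induction j with
    | zero => omega
    | succ j ih =>
      have hsepj : di j < ci (j + 1) := hsep j hjn
      rcases Nat.lt_or_ge i j with h | h
      · exact lt_trans (lt_of_lt_of_le (ih h (by omega)) (hcd j)) hsepj
      · have hij' : i = j := by omega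
        subst hij'
        exact hsepj
  -- pieces monotone, find/cover
  have pmono : ∀ j k, j ≤ k → k ≤ N → pts j ≤ pts k := by
    intro j k hjk hkN
    induction k with
    | zero =>
      have : j = 0 := by omega
      subst this; exact le_refl _
    | succ k ih =>
      rcases Nat.lt_or_ge j (k + 1) with h | h
      · exact le_trans (ih (by omega) (by omega)) (hmono k (by omega))
      · have : j = k + 1 := by omega
        subst this; exact le_refl _
  have hfind : ∀ z, a ≤ z → z < b → ∃ k < N, pts k ≤ z ∧ z < pts (k + 1) := by
    intro z hza hzb
    set T : Finset ℕ := (Finset.range (N + 1)).filter (fun k => pts k ≤ z) with hT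
    have h0T : 0 ∈ T := by
      rw [hT, Finset.mem_filter, Finset.mem_range]
      exact ⟨by omega, by rw [hp0]; exact hza⟩
    set k0 := T.max' ⟨0, h0T⟩ with hk0
    have hk0T : k0 ∈ T := T.max'_mem _
    rw [hT, Finset.mem_filter, Finset.mem_range] at hk0T
    have hk0N : k0 ≠ N := by
      intro hEq
      rw [hEq, hpN] at hk0T
      linarith [hk0T.2]
    refine ⟨k0, by omega, hk0T.2, ?_⟩
    by_contra hle
    push_neg at hle
    have : k0 + 1 ∈ T := by
      rw [hT, Finset.mem_filter, Finset.mem_range]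
      exact ⟨by omega, hle⟩
    have := T.le_max' _ this
    omega
  have hcover : ∀ z ∈ Set.Icc a b, ∃ k < N, z ∈ Set.Icc (pts k) (pts (k + 1)) := by
    intro z hz
    rcases eq_or_lt_of_le hz.2 with hzb | hzb
    · refine ⟨N - 1, by omega, ?_⟩
      rw [show N - 1 + 1 = N by omega]
      constructor
      · rw [hzb, ← hpN]; exact pmono (N - 1) N (by omega) (le_refl N)
      · rw [hzb, hpN]
    · obtain ⟨k, hk, h1, h2⟩ := hfind z hz.1 hzb
      exact ⟨k, hk, h1, h2.le⟩
  -- bands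
  have hband : ∀ i, ∃ p1 p2 q1 q2 : ℝ, i < n →
      (p1 ∈ Set.Icc (ci i) (di i) ∧ p2 ∈ Set.Icc (ci i) (di i) ∧ p1 ≤ p2 ∧
       μ / ρ ^ t ≤ p2 - p1 ∧ (∀ z ∈ Set.Icc p1 p2, f^[t] z ≤ x + μ) ∧
       q1 ∈ Set.Icc (ci i) (di i) ∧ q2 ∈ Set.Icc (ci i) (di i) ∧ q1 ≤ q2 ∧
       μ / ρ ^ t ≤ q2 - q1 ∧ (∀ z ∈ Set.Icc q1 q2, y - μ ≤ f^[t] z)) := by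
    intro i
    by_cases hi : i < n
    swap
    · exact ⟨0, 0, 0, 0, fun h => absurd h hi⟩
    obtain ⟨hu, hv, hux, hvy⟩ := huv i hi
    have hIab : Set.Icc (ci i) (di i) ⊆ Set.Icc a b :=
      Set.Icc_subset_Icc (hmemI i hi).1 (hmemI i hi).2
    have hGu : G (u i) = x := by rw [hGF _ hu]; exact hux
    have hGv : G (v i) = y := by rw [hGF _ hv]; exact hvy
    have hends : (G (ci i) = x ∧ G (di i) = y) ∨ (G (ci i) = y ∧ G (di i) = x) := by
      rcases le_total (u i) (v i) with h | h
      · left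
        constructor
        · show G (min (u i) (v i)) = x
          rw [min_eq_left h]; exact hGu
        · show G (max (u i) (v i)) = y
          rw [max_eq_right h]; exact hGv
      · right
        constructor
        · show G (min (u i) (v i)) = y
          rw [min_eq_right h]; exact hGv
        · show G (max (u i) (v i)) = x
          rw [max_eq_left h]; exact hGu
    obtain ⟨p1, p2, hp1, hp12, hp2, hpv, hpband⟩ :=
      low' G hGcont (ci i) (di i) x y (x + μ) (hcd i) (by linarith) (by
        rw [hμdef, hm_def]; linarith) hends
    obtain ⟨q1, q2, hq1, hq12, hq2, hqv, hqband⟩ :=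
      high' G hGcont (ci i) (di i) x y (y - μ) (hcd i) (by
        rw [hμdef, hm_def]; linarith) (by linarith) hends
    have hp1I : p1 ∈ Set.Icc (ci i) (di i) := ⟨hp1, hp12.trans hp2⟩
    have hp2I : p2 ∈ Set.Icc (ci i) (di i) := ⟨hp1.trans hp12, hp2⟩
    have hq1I : q1 ∈ Set.Icc (ci i) (di i) := ⟨hq1, hq12.trans hq2⟩
    have hq2I : q2 ∈ Set.Icc (ci i) (di i) := ⟨hq1.trans hq12, hq2⟩
    have hlen : ∀ w1 w2 : ℝ, w1 ∈ Set.Icc (ci i) (di i) → w2 ∈ Set.Icc (ci i) (di i) →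
        w1 ≤ w2 → |G w2 - G w1| = μ → μ / ρ ^ t ≤ w2 - w1 := by
      intro w1 w2 hw1 hw2 hw12 habs
      have h1 : |f^[t] w2 - f^[t] w1| ≤ ρ ^ t * |w2 - w1| :=
        hlipI _ (hIab hw2) _ (hIab hw1)
      rw [← hGF _ (hIab hw2), ← hGF _ (hIab hw1)] at h1
      rw [habs, abs_of_nonneg (by linarith)] at h1
      rw [div_le_iff₀ hL0]
      linarith [mul_comm (ρ ^ t) (w2 - w1)]
    have hplen : μ / ρ ^ t ≤ p2 - p1 := by
      apply hlen p1 p2 hp1I hp2I hp12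
      rcases hpv with ⟨h1, h2⟩ | ⟨h1, h2⟩ <;> rw [h1, h2] <;>
        simp [abs_of_nonneg, abs_of_nonpos, hμ.le] <;> ring_nf <;>
        rw [abs_of_nonneg hμ.le]
    have hqlen : μ / ρ ^ t ≤ q2 - q1 := by
      apply hlen q1 q2 hq1I hq2I hq12
      rcases hqv with ⟨h1, h2⟩ | ⟨h1, h2⟩ <;> rw [h1, h2] <;>
        simp [abs_of_nonneg, abs_of_nonpos, hμ.le] <;> ring_nf <;>
        rw [abs_of_nonneg hμ.le]
    refine ⟨p1, p2, q1, q2, fun _ => ⟨hp1I, hp2I, hp12, hplen, ?_, hq1I, hq2I, hq12, hqlen, ?_⟩⟩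
    · intro z hz
      have hzI : z ∈ Set.Icc (ci i) (di i) := ⟨hp1.trans hz.1, hz.2.trans hp2⟩
      rw [← hGF _ (hIab hzI)]
      exact hpband z hz
    · intro z hz
      have hzI : z ∈ Set.Icc (ci i) (di i) := ⟨hq1.trans hz.1, hz.2.trans hq2⟩
      rw [← hGF _ (hIab hzI)]
      exact hqband z hz
  choose P1 P2 Q1 Q2 hB using hband
    -- good and bad indices
  set GoodP : ℕ → Prop := fun i =>
    (∀ z ∈ Set.Icc (ci i) (di i), mid ≤ g z) ∨
    (∀ z ∈ Set.Icc (ci i) (di i), g z < mid) with hGoodP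
  set Goods := (Finset.range n).filter GoodP with hGoods
  set Bad := (Finset.range n).filter (fun i => ¬ GoodP i) with hBadDef
  set InPiece : ℕ → Prop := fun i =>
    ∃ k < N, Set.Icc (ci i) (di i) ⊆ Set.Icc (pts k) (pts (k + 1)) with hInP
  set Bad1 := Bad.filter (fun i => ¬ InPiece i) with hBad1
  set Bad2 := Bad.filter InPiece with hBad2
  have hB1range : ∀ i ∈ Bad1, i < n := by
    intro i hi
    rw [hBad1, Finset.mem_filter, hBadDef, Finset.mem_filter, Finset.mem_range] at hi
    exact hi.1.1
  have hB2range : ∀ i ∈ Bad2, i < n := by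
    intro i hi
    rw [hBad2, Finset.mem_filter, hBadDef, Finset.mem_filter, Finset.mem_range] at hi
    exact hi.1.1
  have hBadcard : Bad.card ≤ 2 * N := by
    have hsplit : Bad2.card + Bad1.card = Bad.card :=
      Finset.card_filter_add_card_filter_not (p := InPiece)
    have h1 : Bad1.card ≤ N := by
      have hex : ∀ i, ∃ k, i ∈ Bad1 → (1 ≤ k ∧ k ≤ N) ∧ ci i < pts k ∧ pts k < di i := by
        intro i
        by_cases hiB : i ∈ Bad1
        swap
        · exact ⟨0, fun h => absurd h hiB⟩
        have hirange : i < n := hB1range i hiB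
        have hnotp : ¬ InPiece i := by
          rw [hBad1, Finset.mem_filter] at hiB; exact hiB.2
        rcases eq_or_lt_of_le ((hcd i).trans (hmemI i hirange).2) with hcb | hcb
        · exfalso
          apply hnotp
          refine ⟨N - 1, by omega, ?_⟩
          rw [show N - 1 + 1 = N by omega]
          apply Set.Icc_subset_Icc
          · rw [hcb, ← hpN]; exact pmono (N - 1) N (by omega) le_rfl
          · rw [hpN]; exact (hmemI i hirange).2
        · obtain ⟨k, hk, hk1, hk2⟩ := hfind (ci i) (hmemI i hirange).1 hcb
          refine ⟨k + 1, fun _ => ⟨⟨by omega, by omega⟩, hk2, ?_⟩⟩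
          by_contra hle
          push_neg at hle
          exact hnotp ⟨k, hk, Set.Icc_subset_Icc hk1 hle⟩
      choose φ hφ using hex
      have hcardle : Bad1.card ≤ (Finset.Icc 1 N).card := by
        apply Finset.card_le_card_of_injOn φ
        · intro i hi
          rw [Finset.mem_coe, Finset.mem_Icc]
          exact ⟨(hφ i hi).1.1, (hφ i hi).1.2⟩
        · intro i hi j hj hij
          by_contra hne
          have hi' : i ∈ Bad1 := Finset.mem_coe.mp hi
          have hj' : j ∈ Bad1 := Finset.mem_coe.mp hj
          rcases lt_or_gt_of_ne hne with h | h
          · have ho := horder i j h (hB1range j hj')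
            have e1 := (hφ i hi').2.2
            have e2 := (hφ j hj').2.1
            rw [hij] at e1
            linarith
          · have ho := horder j i h (hB1range i hi')
            have e1 := (hφ j hj').2.2
            have e2 := (hφ i hi').2.1
            rw [hij] at e2
            linarith
      simpa [Nat.card_Icc] using hcardle
    have h2 : Bad2.card ≤ N := by
      have hex : ∀ i, ∃ k, i ∈ Bad2 →
          k < N ∧ Set.Icc (ci i) (di i) ⊆ Set.Icc (pts k) (pts (k + 1)) ∧
          (∃ z1 ∈ Set.Icc (ci i) (di i), g z1 < mid) ∧
          (∃ z2 ∈ Set.Icc (ci i) (di i), mid ≤ g z2) := by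
        intro i
        by_cases hiB : i ∈ Bad2
        swap
        · exact ⟨0, fun h => absurd h hiB⟩
        have hInp : InPiece i := by
          rw [hBad2, Finset.mem_filter] at hiB; exact hiB.2
        have hnotgood : ¬ GoodP i := by
          rw [hBad2, Finset.mem_filter, hBadDef, Finset.mem_filter] at hiB
          exact hiB.1.2
        obtain ⟨k, hk, hsub⟩ := hInp
        simp only [hGoodP] at hnotgood
        push_neg at hnotgood
        obtain ⟨hA, hBneg⟩ := hnotgood
        obtain ⟨z1, hz1m, hz1⟩ := hA
        obtain ⟨z2, hz2m, hz2⟩ := hBneg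
        exact ⟨k, fun _ => ⟨hk, hsub, ⟨z1, hz1m, hz1⟩, ⟨z2, hz2m, hz2⟩⟩⟩
      choose ψ hψ using hex
      have core : ∀ i j, i ∈ Bad2 → j ∈ Bad2 → i < j → ψ i = ψ j → False := by
        intro i j hi hj hij hψij
        obtain ⟨hki, hsubi, ⟨z1i, hz1im, hz1i⟩, ⟨z2i, hz2im, hz2i⟩⟩ := hψ i hi
        obtain ⟨hkj, hsubj, ⟨z1j, hz1jm, hz1j⟩, ⟨z2j, hz2jm, hz2j⟩⟩ := hψ j hj
        obtain ⟨α, β, hαβ⟩ := haffine (ψ i) hki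
        have hji : di i < ci j := horder i j hij (hB2range j hj)
        have hz1ip := hsubi hz1im
        have hz2ip := hsubi hz2im
        have hz1jp : z1j ∈ Set.Icc (pts (ψ i)) (pts (ψ i + 1)) := by
          rw [hψij]; exact hsubj hz1jm
        have hz2jp : z2j ∈ Set.Icc (pts (ψ i)) (pts (ψ i + 1)) := by
          rw [hψij]; exact hsubj hz2jm
        have e1i : g z1i = α * z1i + β := hαβ _ hz1ip
        have e2i : g z2i = α * z2i + β := hαβ _ hz2ip
        have e1j : g z1j = α * z1j + β := hαβ _ hz1jp
        have e2j : g z2j = α * z2j + β := hαβ _ hz2jp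
        rcases le_total z1i z2i with hle | hle
        · have hmax := affine_le_max α β z1i z2i z1j hle
            (by linarith [hz2im.2, hz1jm.1])
          rw [← e1i, ← e2i, ← e1j] at hmax
          rcases max_cases (g z1i) (g z1j) with ⟨hc, _⟩ | ⟨hc, _⟩ <;> rw [hc] at hmax <;> linarith
        · have hmin := affine_min_le α β z2i z1i z2j hle
            (by linarith [hz1im.2, hz2jm.1])
          rw [← e2i, ← e1i, ← e2j] at hmin
          rcases min_cases (g z2i) (g z2j) with ⟨hc, _⟩ | ⟨hc, _⟩ <;> rw [hc] at hmin <;> linarith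
      have hcardle : Bad2.card ≤ (Finset.range N).card := by
        apply Finset.card_le_card_of_injOn ψ
        · intro i hi
          rw [Finset.mem_coe, Finset.mem_range]
          exact (hψ i hi).1
        · intro i hi j hj hij
          by_contra hne
          rcases lt_or_gt_of_ne hne with h | h
          · exact core i j (Finset.mem_coe.mp hi) (Finset.mem_coe.mp hj) h hij
          · exact core j i (Finset.mem_coe.mp hj) (Finset.mem_coe.mp hi) h hij.symm
      simpa [Finset.card_range] using hcardle
    omega
  have hGoodscard : (n : ℝ) - 2 * N ≤ (Goods.card : ℝ) := by
    have hsum := Finset.card_filter_add_card_filter_not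
      (s := Finset.range n) (p := GoodP)
    rw [Finset.card_range, ← hGoods, ← hBadDef] at hsum
    have hb : (Bad.card : ℝ) ≤ 2 * N := by exact_mod_cast hBadcard
    have he : (Goods.card : ℝ) + (Bad.card : ℝ) = n := by exact_mod_cast hsum
    linarith
  -- choose a witness interval for each good index
  have hJex : ∀ i, ∃ r s : ℝ, i ∈ Goods →
      (Set.Icc r s ⊆ Set.Icc (ci i) (di i) ∧ μ / ρ ^ t ≤ s - r ∧
       ∀ z ∈ Set.Icc r s, μ ≤ |f^[t] z - g z|) := by
    intro i
    by_cases hiG : i ∈ Goods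
    swap
    · exact ⟨0, 0, fun h => absurd h hiG⟩
    have hi : i < n := by
      rw [hGoods, Finset.mem_filter, Finset.mem_range] at hiG; exact hiG.1
    have hgood : GoodP i := by
      rw [hGoods, Finset.mem_filter] at hiG; exact hiG.2
    obtain ⟨hp1I, hp2I, hp12, hplen, hpband, hq1I, hq2I, hq12, hqlen, hqband⟩ := hB i hi
    rcases hgood with hup | hdown
    · refine ⟨P1 i, P2 i, fun _ => ⟨Set.Icc_subset_Icc hp1I.1 hp2I.2, hplen, ?_⟩⟩
      intro z hz
      have hzI : z ∈ Set.Icc (ci i) (di i) := ⟨hp1I.1.trans hz.1, hz.2.trans hp2I.2⟩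
      have h1 : f^[t] z ≤ x + μ := hpband z hz
      have h2 : mid ≤ g z := hup z hzI
      calc μ ≤ g z - f^[t] z := by
            rw [hμdef, hm_def]
            rw [hmid_def] at h2
            linarith
        _ ≤ |g z - f^[t] z| := le_abs_self _
        _ = |f^[t] z - g z| := abs_sub_comm _ _
    · refine ⟨Q1 i, Q2 i, fun _ => ⟨Set.Icc_subset_Icc hq1I.1 hq2I.2, hqlen, ?_⟩⟩
      intro z hz
      have hzI : z ∈ Set.Icc (ci i) (di i) := ⟨hq1I.1.trans hz.1, hz.2.trans hq2I.2⟩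
      have h1 : y - μ ≤ f^[t] z := hqband z hz
      have h2 : g z < mid := hdown z hzI
      calc μ ≤ f^[t] z - g z := by
            rw [hμdef, hm_def]
            rw [hmid_def] at h2
            linarith
        _ ≤ |f^[t] z - g z| := le_abs_self _
  choose r s hrs using hJex
  -- integrability
  have hFint : MeasureTheory.IntegrableOn (f^[t]) (Set.Icc a b) := hcontI.integrableOn_Icc
  have hgint : MeasureTheory.IntegrableOn g (Set.Icc a b) := by
    have hsub : Set.Icc a b ⊆ ⋃ k ∈ Finset.range N, Set.Icc (pts k) (pts (k + 1)) := by
      intro z hz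
      obtain ⟨k, hk, hzk⟩ := hcover z hz
      exact Set.mem_biUnion (Finset.mem_range.mpr hk) hzk
    apply MeasureTheory.IntegrableOn.mono_set _ hsub
    rw [MeasureTheory.integrableOn_finset_iUnion]
    intro k hk
    obtain ⟨α, β, hαβ⟩ := haffine k (Finset.mem_range.mp hk)
    have haff : MeasureTheory.IntegrableOn (fun z => α * z + β)
        (Set.Icc (pts k) (pts (k + 1))) :=
      (((continuous_const.mul continuous_id).add continuous_const).continuousOn).integrableOn_Icc
    exact haff.congr_fun (fun z hz => (hαβ z hz).symm) measurableSet_Icc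
  have hint : MeasureTheory.IntegrableOn (fun z => |f^[t] z - g z|) (Set.Icc a b) :=
    (hFint.sub hgint).abs
  have hJsub : ∀ i ∈ Goods, Set.Icc (r i) (s i) ⊆ Set.Icc a b := by
    intro i hiG
    have hi : i < n := by
      rw [hGoods, Finset.mem_filter, Finset.mem_range] at hiG; exact hiG.1
    exact ((hrs i hiG).1).trans (Set.Icc_subset_Icc (hmemI i hi).1 (hmemI i hi).2)
  have hGrange : ∀ i ∈ Goods, i < n := by
    intro i hiG
    rw [hGoods, Finset.mem_filter, Finset.mem_range] at hiG; exact hiG.1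
  have hdisj : (↑Goods : Set ℕ).Pairwise (Function.onFun Disjoint (fun i => Set.Icc (r i) (s i))) := by
    have core : ∀ i j, i ∈ Goods → j ∈ Goods → i < j →
        Disjoint (Set.Icc (r i) (s i)) (Set.Icc (r j) (s j)) := by
      intro i j hi hj hij
      have h1 : di i < ci j := horder i j hij (hGrange j hj)
      rw [Set.disjoint_left]
      intro z hz1 hz2
      have e1 : z ≤ di i := ((hrs i hi).1 hz1).2
      have e2 : ci j ≤ z := ((hrs j hj).1 hz2).1
      linarith
    intro i hi j hj hij
    rcases lt_or_gt_of_ne hij with h | h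
    · exact core i j (Finset.mem_coe.mp hi) (Finset.mem_coe.mp hj) h
    · exact (core j i (Finset.mem_coe.mp hj) (Finset.mem_coe.mp hi) h).symm
  have hper : ∀ i ∈ Goods, μ * (s i - r i) ≤ ∫ z in Set.Icc (r i) (s i), |f^[t] z - g z| := by
    intro i hiG
    obtain ⟨hsub, hlen, hbound⟩ := hrs i hiG
    have hpos : 0 < μ / ρ ^ t := div_pos hμ hL0
    have hrsle : r i ≤ s i := by linarith
    have hmeas : volume (Set.Icc (r i) (s i)) = ENNReal.ofReal (s i - r i) := Real.volume_Icc
    have key := MeasureTheory.setIntegral_ge_of_const_le (μ := volume)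
      (s := Set.Icc (r i) (s i)) (c := μ) measurableSet_Icc
      (by rw [hmeas]; exact ENNReal.ofReal_ne_top) hbound (hint.mono_set (hJsub i hiG))
    rw [measureReal_def, hmeas, ENNReal.toReal_ofReal (by linarith : (0:ℝ) ≤ s i - r i),
      smul_eq_mul, mul_comm (s i - r i) μ] at key
    exact key
  have hsum : ∑ i ∈ Goods, μ * (s i - r i) ≤ ∫ z in Set.Icc a b, |f^[t] z - g z| := by
    calc ∑ i ∈ Goods, μ * (s i - r i)
        ≤ ∑ i ∈ Goods, ∫ z in Set.Icc (r i) (s i), |f^[t] z - g z| :=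
          Finset.sum_le_sum hper
      _ = ∫ z in ⋃ i ∈ Goods, Set.Icc (r i) (s i), |f^[t] z - g z| :=
          (MeasureTheory.integral_biUnion_finset Goods (fun i _ => measurableSet_Icc)
            hdisj (fun i hi => hint.mono_set (hJsub i hi))).symm
      _ ≤ ∫ z in Set.Icc a b, |f^[t] z - g z| := by
          apply MeasureTheory.setIntegral_mono_set hint
          · exact MeasureTheory.ae_of_all _ (fun z => abs_nonneg _)
          · exact (Set.iUnion₂_subset hJsub).eventuallyLE
  have hlow : (Goods.card : ℝ) * (μ * (μ / ρ ^ t)) ≤ ∑ i ∈ Goods, μ * (s i - r i) := by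
    have key := Finset.card_nsmul_le_sum Goods (fun i => μ * (s i - r i)) (μ * (μ / ρ ^ t))
      (fun i hi => mul_le_mul_of_nonneg_left (hrs i hi).2.1 hμ.le)
    simpa [nsmul_eq_mul] using key
  have hfinal : m ^ 2 / 32 ≤ (Goods.card : ℝ) * (μ * (μ / ρ ^ t)) := by
    have hcard : (3 / 4 : ℝ) * ρ ^ t ≤ (Goods.card : ℝ) := by linarith
    have hq : μ * (μ / ρ ^ t) = m ^ 2 / (16 * ρ ^ t) := by
      rw [hμdef]; field_simp; ring
    rw [hq]
    have h2 : (0:ℝ) ≤ m ^ 2 / (16 * ρ ^ t) := by positivity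
    have h1 : (3 / 4 : ℝ) * ρ ^ t * (m ^ 2 / (16 * ρ ^ t)) = 3 * m ^ 2 / 64 := by
      field_simp; ring
    calc m ^ 2 / 32 ≤ 3 * m ^ 2 / 64 := by nlinarith [sq_nonneg m]
      _ = (3 / 4 : ℝ) * ρ ^ t * (m ^ 2 / (16 * ρ ^ t)) := h1.symm
      _ ≤ (Goods.card : ℝ) * (m ^ 2 / (16 * ρ ^ t)) :=
          mul_le_mul_of_nonneg_right hcard h2
  calc m ^ 2 / 32 ≤ (Goods.card : ℝ) * (μ * (μ / ρ ^ t)) := hfinal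
    _ ≤ ∑ i ∈ Goods, μ * (s i - r i) := hlow
    _ ≤ ∫ z in Set.Icc a b, |f^[t] z - g z| := hsum
end

section
/- Let p ≥ 3 be an odd integer, let f : ℝ → ℝ be continuous, and let x_1, …, x_p be reals satisfying x_p < x_{p−2} < ⋯ < x_3 < x_1 < x_2 < x_4 < ⋯ < x_{p−1}, with f(x_i) = x_{i+1} for all 1 ≤ i ≤ p−1 and f(x_p) = x_1. Define the closed intervals I_0 = [x_1, x_2], I_j = [x_{2j}, x_{2j+2}] for 1 ≤ j ≤ (p−3)/2, and J_j = [x_{2j+1}, x_{2j−1}] for 1 ≤ j ≤ (p−1)/2. Then: (1) I_0 ∪ J_1 ⊆ f(I_0); (2) J_{j+1} ⊆ f(I_j) for every 1 ≤ j ≤ (p−3)/2; (3) I_j ⊆ f(J_j) for every 1 ≤ j ≤ (p−3)/2; and (4) I_0 ∪ I_1 ∪ ⋯ ∪ I_{(p−3)/2} ⊆ f(J_{(p−1)/2}). -/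
theorem stmt_8 (p : ℕ) (hp : 3 ≤ p) (hodd : Odd p) (f : ℝ → ℝ) (hf : Continuous f)
    (x : ℕ → ℝ)
    (hmap : ∀ i, 1 ≤ i → i ≤ p - 1 → f (x i) = x (i + 1))
    (hmapp : f (x p) = x 1)
    (hoddchain : ∀ i, Odd i → i + 2 ≤ p → x (i + 2) < x i)
    (h12 : x 1 < x 2)
    (hevenchain : ∀ i, Even i → 2 ≤ i → i + 2 ≤ p - 1 → x i < x (i + 2)) :
    (Set.Icc (x 1) (x 2) ∪ Set.Icc (x 3) (x 1) ⊆ f '' Set.Icc (x 1) (x 2)) ∧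
    (∀ j, 1 ≤ j → j ≤ (p - 3) / 2 →
      Set.Icc (x (2 * j + 3)) (x (2 * j + 1)) ⊆
        f '' Set.Icc (x (2 * j)) (x (2 * j + 2))) ∧
    (∀ j, 1 ≤ j → j ≤ (p - 3) / 2 →
      Set.Icc (x (2 * j)) (x (2 * j + 2)) ⊆
        f '' Set.Icc (x (2 * j + 1)) (x (2 * j - 1))) ∧
    ((Set.Icc (x 1) (x 2) ∪
        ⋃ j ∈ Finset.Icc 1 ((p - 3) / 2), Set.Icc (x (2 * j)) (x (2 * j + 2))) ⊆
      f '' Set.Icc (x p) (x (p - 2))) := by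
  obtain ⟨m, hm⟩ := hodd
  subst hm
  have hm1 : 1 ≤ m := by omega
  -- even chain monotonicity
  have heven : ∀ d k : ℕ, 1 ≤ k → 2 * (k + d) ≤ 2 * m → x (2 * k) ≤ x (2 * (k + d)) := by
    intro d
    induction d with
    | zero => intro k _ _; simp
    | succ n ih =>
      intro k hk hl
      have h1 : x (2 * k) ≤ x (2 * (k + n)) := ih k hk (by omega)
      have h2 : x (2 * (k + n)) < x (2 * (k + n) + 2) :=
        hevenchain (2 * (k + n)) (even_two_mul _) (by omega) (by omega)
      have e : 2 * (k + n) + 2 = 2 * (k + (n + 1)) := by ring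
      rw [e] at h2
      linarith
  refine ⟨?_, ?_, ?_, ?_⟩
  · -- part 1
    have h31 : x 3 < x 1 := by
      have := hoddchain 1 ⟨0, by ring⟩ (by omega)
      simpa using this
    have key := intermediate_value_Icc' h12.le hf.continuousOn
    rw [hmap 1 le_rfl (by omega), hmap 2 (by omega) (by omega)] at key
    intro y hy
    apply key
    rcases hy with hy | hy <;> exact ⟨by linarith [hy.1], by linarith [hy.2]⟩
  · -- part 2
    intro j hj1 hj2
    have hj : j ≤ m - 1 := by omega
    have hle : x (2 * j) ≤ x (2 * j + 2) :=
      (hevenchain (2 * j) (even_two_mul j) (by omega) (by omega)).le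
    have key := intermediate_value_Icc' hle hf.continuousOn
    rw [hmap (2 * j) (by omega) (by omega), hmap (2 * j + 2) (by omega) (by omega),
      show 2 * j + 2 + 1 = 2 * j + 3 by ring] at key
    exact key
  · -- part 3
    intro j hj1 hj2
    have hj : j ≤ m - 1 := by omega
    have hlt : x (2 * j + 1) < x (2 * j - 1) := by
      have := hoddchain (2 * j - 1) ⟨j - 1, by omega⟩ (by omega)
      rwa [show 2 * j - 1 + 2 = 2 * j + 1 by omega] at this
    have key := intermediate_value_Icc' hlt.le hf.continuousOn
    rw [hmap (2 * j - 1) (by omega) (by omega), hmap (2 * j + 1) (by omega) (by omega),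
      show 2 * j - 1 + 1 = 2 * j by omega] at key
    exact key
  · -- part 4
    have hp2 : 2 * m + 1 - 2 = 2 * m - 1 := by omega
    rw [hp2]
    have hlt : x (2 * m + 1) < x (2 * m - 1) := by
      have := hoddchain (2 * m - 1) ⟨m - 1, by omega⟩ (by omega)
      rwa [show 2 * m - 1 + 2 = 2 * m + 1 by omega] at this
    have key := intermediate_value_Icc hlt.le hf.continuousOn
    rw [hmapp, hmap (2 * m - 1) (by omega) (by omega),
      show 2 * m - 1 + 1 = 2 * m by omega] at key
    have h2m : x 2 ≤ x (2 * m) := by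
      have := heven (m - 1) 1 le_rfl (by omega)
      rwa [show 2 * (1 + (m - 1)) = 2 * m by omega] at this
    intro y hy
    apply key
    rcases hy with hy | hy
    · exact ⟨hy.1, by linarith [hy.2]⟩
    · simp only [Set.mem_iUnion, Finset.mem_Icc] at hy
      obtain ⟨j, ⟨hj1, hj2⟩, hy⟩ := hy
      have hj : j ≤ m - 1 := by omega
      have h2j : x 2 ≤ x (2 * j) := by
        have := heven (j - 1) 1 le_rfl (by omega)
        rwa [show 2 * (1 + (j - 1)) = 2 * j by omega] at this
      have h2j2 : x (2 * j + 2) ≤ x (2 * m) := by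
        have := heven (m - j - 1) (j + 1) (by omega) (by omega)
        rwa [show 2 * (j + 1) = 2 * j + 2 by omega,
          show 2 * (j + 1 + (m - j - 1)) = 2 * m by omega] at this
      exact ⟨by linarith [hy.1], by linarith [hy.2]⟩
end

section
/- Let p ≥ 3 be an odd integer and let A be the (p−1)×(p−1) real matrix with rows and columns indexed by {0, 1, …, p−2}, whose entries are A_{j,i} = 1 if (i = 0 and j = 0), or (j = i + (p−1)/2 and 0 ≤ i ≤ (p−3)/2), or (j = i + 1 − (p−1)/2 and (p−1)/2 ≤ i ≤ p−3), or (i = p−2 and 0 ≤ j ≤ (p−3)/2), and A_{j,i} = 0 otherwise. Then the spectral radius of A, i.e., the maximum of |λ| over all complex eigenvalues λ of A, equals ρ_p. -/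
/-- The adjacency matrix of the covering-relation graph for an odd period `p`,
with rows and columns indexed by `{0, …, p-2}`. -/
def coveringMatrix (p : ℕ) : Matrix (Fin (p - 1)) (Fin (p - 1)) ℝ :=
  fun j i =>
    if ((i : ℕ) = 0 ∧ (j : ℕ) = 0) ∨
       ((j : ℕ) = (i : ℕ) + (p - 1) / 2 ∧ (i : ℕ) ≤ (p - 3) / 2) ∨
       ((j : ℕ) + (p - 1) / 2 = (i : ℕ) + 1 ∧ (p - 1) / 2 ≤ (i : ℕ) ∧ (i : ℕ) ≤ p - 3) ∨
       ((i : ℕ) = p - 2 ∧ (j : ℕ) ≤ (p - 3) / 2)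
    then 1 else 0

noncomputable def Wt (ρ : ℝ) (m : ℕ) : ℕ → ℝ := fun j =>
  if j = 0 then (ρ * (ρ - 1))⁻¹ else if j < m then ρ ^ (2 * (j - 1)) else ρ ^ (2 * (j - m)) / ρ

lemma Wt_pos {ρ : ℝ} (hρ1 : 1 < ρ) (m j : ℕ) : 0 < Wt ρ m j := by
  have h0 : 0 < ρ := by linarith
  have h1 : 0 < ρ - 1 := by linarith
  unfold Wt
  split_ifs <;> positivity

lemma key_sum (m : ℕ) (hm : 1 ≤ m) (ρ : ℝ) (hρ1 : 1 < ρ)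
    (hρ : ρ ^ (2 * m + 1) - 2 * ρ ^ (2 * m - 1) - 1 = 0) (iv : ℕ) (hiv : iv < 2 * m) :
    ∑ j ∈ Finset.range (2 * m), Wt ρ m j *
      (if (iv = 0 ∧ j = 0) ∨ (j = iv + m ∧ iv ≤ m - 1) ∨
          (j + m = iv + 1 ∧ m ≤ iv ∧ iv ≤ 2 * m - 2) ∨ (iv = 2 * m - 1 ∧ j ≤ m - 1)
        then (1 : ℝ) else 0) = ρ * Wt ρ m iv := by
  have hρ0 : ρ ≠ 0 := by linarith
  have hρ1' : ρ - 1 ≠ 0 := by intro h; linarith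
  by_cases h0 : iv = 0
  · subst h0
    have e : ∀ j ∈ Finset.range (2 * m), Wt ρ m j *
        (if (0 = 0 ∧ j = 0) ∨ (j = 0 + m ∧ 0 ≤ m - 1) ∨
            (j + m = 0 + 1 ∧ m ≤ 0 ∧ 0 ≤ 2 * m - 2) ∨ (0 = 2 * m - 1 ∧ j ≤ m - 1)
          then (1 : ℝ) else 0)
        = (if j = 0 then Wt ρ m j else 0) + (if j = m then Wt ρ m j else 0) := by
      intro j hj
      simp only [Finset.mem_range] at hj
      have hcond : ((0 = 0 ∧ j = 0) ∨ (j = 0 + m ∧ 0 ≤ m - 1) ∨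
            (j + m = 0 + 1 ∧ m ≤ 0 ∧ 0 ≤ 2 * m - 2) ∨ (0 = 2 * m - 1 ∧ j ≤ m - 1))
          ↔ (j = 0 ∨ j = m) := by omega
      rw [if_congr hcond rfl rfl]
      by_cases h1 : j = 0
      · rw [if_pos (Or.inl h1), h1, if_pos rfl, if_neg (by omega : ¬(0:ℕ) = m), mul_one,
          add_zero]
      · by_cases h2 : j = m
        · rw [if_pos (Or.inr h2), if_neg h1, h2, if_pos rfl, mul_one, zero_add]
        · rw [if_neg (by tauto), if_neg h1, if_neg h2, mul_zero, add_zero]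
    rw [Finset.sum_congr rfl e, Finset.sum_add_distrib, Finset.sum_ite_eq',
      Finset.sum_ite_eq', if_pos (Finset.mem_range.mpr (by omega)),
      if_pos (Finset.mem_range.mpr (by omega))]
    have w0 : Wt ρ m 0 = (ρ * (ρ - 1))⁻¹ := by simp [Wt]
    have wm : Wt ρ m m = 1 / ρ := by
      simp only [Wt, if_neg (by omega : ¬ m = 0), if_neg (lt_irrefl m), Nat.sub_self]
      norm_num
    rw [w0, wm]
    field_simp
    ring
  · by_cases hD : iv = 2 * m - 1
    · subst hD
      -- case iv = 2*m - 1
      have e : ∀ j ∈ Finset.range (2 * m), Wt ρ m j *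
          (if (2 * m - 1 = 0 ∧ j = 0) ∨ (j = 2 * m - 1 + m ∧ 2 * m - 1 ≤ m - 1) ∨
              (j + m = 2 * m - 1 + 1 ∧ m ≤ 2 * m - 1 ∧ 2 * m - 1 ≤ 2 * m - 2) ∨
              (2 * m - 1 = 2 * m - 1 ∧ j ≤ m - 1)
            then (1 : ℝ) else 0)
          = (if j < m then Wt ρ m j else 0) := by
        intro j hj
        simp only [Finset.mem_range] at hj
        have hcond : ((2 * m - 1 = 0 ∧ j = 0) ∨ (j = 2 * m - 1 + m ∧ 2 * m - 1 ≤ m - 1) ∨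
              (j + m = 2 * m - 1 + 1 ∧ m ≤ 2 * m - 1 ∧ 2 * m - 1 ≤ 2 * m - 2) ∨
              (2 * m - 1 = 2 * m - 1 ∧ j ≤ m - 1)) ↔ j < m := by omega
        rw [if_congr hcond rfl rfl]
        split_ifs <;> simp
      rw [Finset.sum_congr rfl e]
      have hsub : ∑ j ∈ Finset.range (2 * m), (if j < m then Wt ρ m j else 0)
          = ∑ j ∈ Finset.range m, Wt ρ m j := by
        rw [← Finset.sum_subset (Finset.range_subset_range.mpr (by omega : m ≤ 2 * m))
          (fun x _ hx => by rw [if_neg (by simpa using hx)])]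
        exact Finset.sum_congr rfl fun x hx => if_pos (Finset.mem_range.mp hx)
      rw [hsub]
      obtain ⟨n, rfl⟩ : ∃ n, m = n + 1 := ⟨m - 1, by omega⟩
      rw [Finset.sum_range_succ']
      have e2 : ∀ i ∈ Finset.range n, Wt ρ (n + 1) (i + 1) = (ρ ^ 2) ^ i := by
        intro i hi
        simp only [Finset.mem_range] at hi
        simp only [Wt, if_neg (by omega : ¬ i + 1 = 0), if_pos (by omega : i + 1 < n + 1),
          Nat.add_sub_cancel, pow_mul]
      rw [Finset.sum_congr rfl e2, geom_sum_eq (by nlinarith : (ρ:ℝ) ^ 2 ≠ 1)]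
      have w0 : Wt ρ (n + 1) 0 = (ρ * (ρ - 1))⁻¹ := by simp [Wt]
      have wlast : Wt ρ (n + 1) (2 * (n + 1) - 1) = ρ ^ (2 * n) / ρ := by
        simp only [Wt, if_neg (by omega : ¬ 2 * (n + 1) - 1 = 0),
          if_neg (by omega : ¬ 2 * (n + 1) - 1 < n + 1)]
        congr 2
        omega
      rw [w0, wlast]
      -- now use the relation
      have hrel : ρ ^ 3 * ρ ^ (2 * n) - 2 * (ρ * ρ ^ (2 * n)) - 1 = 0 := by
        have e3 : 2 * (n + 1) + 1 = 2 * n + 3 := by ring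
        have e4 : 2 * (n + 1) - 1 = 2 * n + 1 := by omega
        rw [e3, e4] at hρ
        rw [← pow_add, ← pow_succ']
        convert hρ using 3 <;> ring
      have hsq : ρ ^ 2 - 1 ≠ 0 := by nlinarith
      have hpm : ((ρ : ℝ) ^ 2) ^ n = ρ ^ (2 * n) := by rw [← pow_mul]
      rw [hpm]
      field_simp
      linear_combination (1 - ρ) * hrel
    · -- single-target cases
      by_cases hB : iv < m
      · -- case 1 ≤ iv ≤ m - 1 : target j₀ = iv + m
        have e : ∀ j ∈ Finset.range (2 * m), Wt ρ m j *
            (if (iv = 0 ∧ j = 0) ∨ (j = iv + m ∧ iv ≤ m - 1) ∨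
                (j + m = iv + 1 ∧ m ≤ iv ∧ iv ≤ 2 * m - 2) ∨ (iv = 2 * m - 1 ∧ j ≤ m - 1)
              then (1 : ℝ) else 0)
            = (if j = iv + m then Wt ρ m j else 0) := by
          intro j hj
          simp only [Finset.mem_range] at hj
          have hcond : ((iv = 0 ∧ j = 0) ∨ (j = iv + m ∧ iv ≤ m - 1) ∨
                (j + m = iv + 1 ∧ m ≤ iv ∧ iv ≤ 2 * m - 2) ∨ (iv = 2 * m - 1 ∧ j ≤ m - 1))
              ↔ j = iv + m := by omega
          rw [if_congr hcond rfl rfl]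
          split_ifs <;> simp
        rw [Finset.sum_congr rfl e, Finset.sum_ite_eq',
          if_pos (Finset.mem_range.mpr (by omega))]
        have wl : Wt ρ m (iv + m) = ρ ^ (2 * iv) / ρ := by
          simp only [Wt, if_neg (by omega : ¬ iv + m = 0), if_neg (by omega : ¬ iv + m < m),
            Nat.add_sub_cancel]
        have wr : Wt ρ m iv = ρ ^ (2 * (iv - 1)) := by
          simp only [Wt, if_neg h0, if_pos hB]
        rw [wl, wr]
        have : 2 * iv = 2 * (iv - 1) + 2 := by omega
        rw [this, pow_add]
        field_simp
      · -- case m ≤ iv ≤ 2m-2 : target j₀ = iv + 1 - m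
        have e : ∀ j ∈ Finset.range (2 * m), Wt ρ m j *
            (if (iv = 0 ∧ j = 0) ∨ (j = iv + m ∧ iv ≤ m - 1) ∨
                (j + m = iv + 1 ∧ m ≤ iv ∧ iv ≤ 2 * m - 2) ∨ (iv = 2 * m - 1 ∧ j ≤ m - 1)
              then (1 : ℝ) else 0)
            = (if j = iv + 1 - m then Wt ρ m j else 0) := by
          intro j hj
          simp only [Finset.mem_range] at hj
          have hcond : ((iv = 0 ∧ j = 0) ∨ (j = iv + m ∧ iv ≤ m - 1) ∨
                (j + m = iv + 1 ∧ m ≤ iv ∧ iv ≤ 2 * m - 2) ∨ (iv = 2 * m - 1 ∧ j ≤ m - 1))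
              ↔ j = iv + 1 - m := by omega
          rw [if_congr hcond rfl rfl]
          split_ifs <;> simp
        rw [Finset.sum_congr rfl e, Finset.sum_ite_eq',
          if_pos (Finset.mem_range.mpr (by omega))]
        have wl : Wt ρ m (iv + 1 - m) = ρ ^ (2 * (iv - m)) := by
          simp only [Wt, if_neg (by omega : ¬ iv + 1 - m = 0),
            if_pos (by omega : iv + 1 - m < m)]
          congr 2
          omega
        have wr : Wt ρ m iv = ρ ^ (2 * (iv - m)) / ρ := by
          simp only [Wt, if_neg h0, if_neg hB]
        rw [wl, wr]
        field_simp

open Matrix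

lemma vec_eig (m : ℕ) (hm : 1 ≤ m) (ρ : ℝ) (hρ1 : 1 < ρ)
    (hρ : ρ ^ (2 * m + 1) - 2 * ρ ^ (2 * m - 1) - 1 = 0) (i : Fin (2 * m)) :
    ∑ j : Fin (2 * m), Wt ρ m (j : ℕ) * coveringMatrix (2 * m + 1) j i
      = ρ * Wt ρ m (i : ℕ) := by
  have e1 : (2 * m + 1 - 1) / 2 = m := by omega
  have e2 : (2 * m + 1 - 3) / 2 = m - 1 := by omega
  have e3 : 2 * m + 1 - 2 = 2 * m - 1 := by omega
  have e4 : 2 * m + 1 - 3 = 2 * m - 2 := by omega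
  have e5 : (2 * m - 2) / 2 = m - 1 := by omega
  rw [← key_sum m hm ρ hρ1 hρ (i : ℕ) i.isLt,
    ← Fin.sum_univ_eq_sum_range (fun j => Wt ρ m j *
      (if ((i : ℕ) = 0 ∧ j = 0) ∨ (j = (i : ℕ) + m ∧ (i : ℕ) ≤ m - 1) ∨
          (j + m = (i : ℕ) + 1 ∧ m ≤ (i : ℕ) ∧ (i : ℕ) ≤ 2 * m - 2) ∨
          ((i : ℕ) = 2 * m - 1 ∧ j ≤ m - 1)
        then (1 : ℝ) else 0)) (2 * m)]
  apply Finset.sum_congr rfl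
  intro j _
  simp only [coveringMatrix, e1, e2, e3, e4, e5]

theorem stmt_10 (p : ℕ) (hp : 3 ≤ p) (hodd : Odd p) (ρ : ℝ) (hρ1 : 1 < ρ)
    (hρ : ρ ^ p - 2 * ρ ^ (p - 2) - 1 = 0) :
    (∃ lam : ℂ,
        Matrix.det (lam • (1 : Matrix (Fin (p - 1)) (Fin (p - 1)) ℂ) -
          (coveringMatrix p).map ((↑) : ℝ → ℂ)) = 0 ∧ ‖lam‖ = ρ) ∧
      ∀ lam : ℂ,
        Matrix.det (lam • (1 : Matrix (Fin (p - 1)) (Fin (p - 1)) ℂ) -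
          (coveringMatrix p).map ((↑) : ℝ → ℂ)) = 0 → ‖lam‖ ≤ ρ := by
  have hρ0 : (0:ℝ) < ρ := by linarith
  obtain ⟨m, rfl⟩ := hodd
  have hm : 1 ≤ m := by omega
  have hρr : ρ ^ (2 * m + 1) - 2 * ρ ^ (2 * m - 1) - 1 = 0 := by
    have h : 2 * m + 1 - 2 = 2 * m - 1 := by omega
    rwa [h] at hρ
  set A : Matrix (Fin (2 * m + 1 - 1)) (Fin (2 * m + 1 - 1)) ℝ :=
    coveringMatrix (2 * m + 1) with hA
  set w : Fin (2 * m + 1 - 1) → ℝ := fun i => Wt ρ m (i : ℕ) with hw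
  have heig : ∀ i : Fin (2 * m + 1 - 1), ∑ j, w j * A j i = ρ * w i :=
    fun i => vec_eig m hm ρ hρ1 hρr i
  have hAnn : ∀ j i, 0 ≤ A j i := by
    intro j i
    simp only [hA, coveringMatrix]
    split_ifs <;> norm_num
  have hwpos : ∀ i, 0 < w i := fun i => Wt_pos hρ1 m _
  have hw0 : w ≠ 0 := by
    intro h
    have h2 : (0:ℕ) < 2 * m + 1 - 1 := by omega
    have := hwpos ⟨0, h2⟩
    rw [h] at this
    exact lt_irrefl 0 this
  -- real eigenvalue statement
  have hv : (ρ • (1 : Matrix (Fin (2 * m + 1 - 1)) (Fin (2 * m + 1 - 1)) ℝ) - A)ᵀ *ᵥ w = 0 := by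
    funext i
    simp only [Matrix.mulVec, dotProduct, Matrix.transpose_apply, Matrix.sub_apply,
      Matrix.smul_apply, Matrix.one_apply, Pi.zero_apply, smul_eq_mul]
    have e : ∀ j : Fin (2 * m + 1 - 1),
        (ρ * (if j = i then (1:ℝ) else 0) - A j i) * w j
        = (if j = i then ρ * w j else 0) - w j * A j i := by
      intro j
      by_cases h : j = i <;> simp [h] <;> ring
    rw [Finset.sum_congr rfl fun j _ => e j, Finset.sum_sub_distrib]
    simp only [Finset.sum_ite_eq', Finset.mem_univ, if_true]
    exact sub_eq_zero_of_eq (heig i).symm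
  have hdetR : (ρ • (1 : Matrix (Fin (2 * m + 1 - 1)) (Fin (2 * m + 1 - 1)) ℝ) - A).det = 0 := by
    rw [← Matrix.det_transpose, ← Matrix.exists_mulVec_eq_zero_iff]
    exact ⟨w, hw0, hv⟩
  have hmapeq : ∀ z : ℝ,
      ((z:ℂ) • (1 : Matrix (Fin (2 * m + 1 - 1)) (Fin (2 * m + 1 - 1)) ℂ) -
        A.map ((↑) : ℝ → ℂ))
      = (z • (1 : Matrix (Fin (2 * m + 1 - 1)) (Fin (2 * m + 1 - 1)) ℝ) - A).map
          Complex.ofRealHom := by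
    intro z
    ext i j
    simp only [Matrix.map_apply, Matrix.sub_apply, Matrix.smul_apply, Matrix.one_apply,
      smul_eq_mul, Complex.ofRealHom_eq_coe]
    push_cast
    split_ifs <;> push_cast <;> ring
  constructor
  · refine ⟨(ρ : ℂ), ?_, ?_⟩
    · rw [hmapeq ρ]
      have hmd := (RingHom.map_det Complex.ofRealHom
        (ρ • (1 : Matrix (Fin (2 * m + 1 - 1)) (Fin (2 * m + 1 - 1)) ℝ) - A)).symm
      calc ((ρ • (1 : Matrix (Fin (2 * m + 1 - 1)) (Fin (2 * m + 1 - 1)) ℝ) - A).map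
            Complex.ofRealHom).det
          = Complex.ofRealHom ((ρ • (1 : Matrix (Fin (2 * m + 1 - 1)) (Fin (2 * m + 1 - 1)) ℝ)
              - A).det) := hmd
        _ = 0 := by rw [hdetR, map_zero]
    · rw [Complex.norm_of_nonneg hρ0.le]
  · intro lam hdet
    obtain ⟨v, hv0, hveq⟩ := (Matrix.exists_mulVec_eq_zero_iff).mpr hdet
    have heqC : ∀ j, lam * v j = ∑ i, ((A j i : ℝ) : ℂ) * v i := by
      intro j
      have h := congrFun hveq j
      simp only [Matrix.mulVec, dotProduct, Matrix.sub_apply, Matrix.smul_apply,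
        Matrix.one_apply, Matrix.map_apply, Pi.zero_apply, smul_eq_mul, sub_mul,
        Finset.sum_sub_distrib] at h
      have e : ∀ i : Fin (2 * m + 1 - 1),
          lam * (if j = i then (1:ℂ) else 0) * v i = if j = i then lam * v i else 0 := by
        intro i
        split_ifs <;> ring
      rw [Finset.sum_congr rfl fun i _ => e i] at h
      simp only [Finset.sum_ite_eq, Finset.mem_univ, if_true] at h
      exact sub_eq_zero.mp h
    set u : Fin (2 * m + 1 - 1) → ℝ := fun i => ‖v i‖ with hu
    have hub : ∀ j, ‖lam‖ * u j ≤ ∑ i, A j i * u i := by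
      intro j
      calc ‖lam‖ * u j = ‖lam * v j‖ := by rw [norm_mul]
        _ = ‖∑ i, ((A j i : ℝ) : ℂ) * v i‖ := by rw [heqC j]
        _ ≤ ∑ i, ‖((A j i : ℝ) : ℂ) * v i‖ := norm_sum_le _ _
        _ = ∑ i, A j i * u i := by
            refine Finset.sum_congr rfl fun i _ => ?_
            rw [norm_mul, Complex.norm_of_nonneg (hAnn j i)]
    have hS : 0 < ∑ i, w i * u i := by
      obtain ⟨i0, hi0⟩ := Function.ne_iff.mp hv0
      refine Finset.sum_pos' (fun i _ => mul_nonneg (hwpos i).le (norm_nonneg _))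
        ⟨i0, Finset.mem_univ _, ?_⟩
      exact mul_pos (hwpos i0) (norm_pos_iff.mpr hi0)
    have hmain : ‖lam‖ * ∑ i, w i * u i ≤ ρ * ∑ i, w i * u i := by
      calc ‖lam‖ * ∑ i, w i * u i
          = ∑ j, w j * (‖lam‖ * u j) := by
            rw [Finset.mul_sum]
            exact Finset.sum_congr rfl fun j _ => by ring
        _ ≤ ∑ j, w j * ∑ i, A j i * u i :=
            Finset.sum_le_sum fun j _ => mul_le_mul_of_nonneg_left (hub j) (hwpos j).le
        _ = ∑ j, ∑ i, w j * (A j i * u i) :=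
            Finset.sum_congr rfl fun j _ => Finset.mul_sum _ _ _
        _ = ∑ i, ∑ j, w j * (A j i * u i) := Finset.sum_comm
        _ = ∑ i, (∑ j, w j * A j i) * u i := by
            refine Finset.sum_congr rfl fun i _ => ?_
            rw [Finset.sum_mul]
            exact Finset.sum_congr rfl fun j _ => by ring
        _ = ∑ i, ρ * w i * u i := Finset.sum_congr rfl fun i _ => by rw [heig i]
        _ = ρ * ∑ i, w i * u i := by
            rw [Finset.mul_sum]
            exact Finset.sum_congr rfl fun i _ => by ring
    exact le_of_mul_le_mul_right hmain hS
end

section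
/- Let p ≥ 3 be an odd integer, and let ρ_p and ρ_{p+2} denote the unique roots in (1,∞) of the equations λ^p − 2λ^{p−2} − 1 = 0 and λ^{p+2} − 2λ^p − 1 = 0 respectively. Then ρ_{p+2} < ρ_p. -/
theorem stmt_12 (p : ℕ) (hp : 3 ≤ p) (hodd : Odd p) (ρp ρq : ℝ)
    (hρp1 : 1 < ρp) (hρp : ρp ^ p - 2 * ρp ^ (p - 2) - 1 = 0)
    (hρq1 : 1 < ρq) (hρq : ρq ^ (p + 2) - 2 * ρq ^ p - 1 = 0) :
    ρq < ρp := by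
  have hp2 : p - 2 + 2 = p := by omega
  have hρppos : (0:ℝ) < ρp := lt_trans one_pos hρp1
  have hρqpos : (0:ℝ) < ρq := lt_trans one_pos hρq1
  have hsplit : ρp ^ p = ρp ^ (p-2) * ρp ^ 2 := by rw [← pow_add, hp2]
  have h1 : ρp ^ (p-2) * (ρp^2 - 2) = 1 := by nlinarith [hρp]
  have hpow : (0:ℝ) < ρp ^ (p-2) := pow_pos hρppos _
  have h2 : 2 < ρp ^ 2 := by nlinarith
  have h3 : ρp ^ p * (ρp^2 - 2) = ρp ^ 2 := by
    rw [hsplit]; nlinarith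
  have hqsplit : ρq ^ (p+2) = ρq ^ p * ρq ^ 2 := by rw [pow_add]
  have h4 : ρq ^ p * (ρq^2 - 2) = 1 := by nlinarith [hρq]
  by_contra h
  push_neg at h
  have hpq : ρp ^ p ≤ ρq ^ p := pow_le_pow_left₀ hρppos.le h p
  have hq2 : ρp^2 - 2 ≤ ρq^2 - 2 := by nlinarith
  have hppos : (0:ℝ) < ρp ^ p := pow_pos hρppos _
  have key : ρp ^ p * (ρp^2 - 2) ≤ ρq ^ p * (ρq^2 - 2) :=
    mul_le_mul hpq hq2 (by linarith) (by positivity)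
  nlinarith
end

section
/- Let p ≥ 5 be an odd integer. Suppose ρ > 1 is a real number with ρ^p − 2ρ^{p−2} − 1 = 0, and ρ' > 1 is a real number with (ρ')^{p−1} − (ρ')^{p−2} − 1 = 0. Then ρ > ρ'. -/
theorem stmt_13 (p : ℕ) (hp : 5 ≤ p) (hodd : Odd p) (ρ ρ' : ℝ)
    (hρ1 : 1 < ρ) (hρ : ρ ^ p - 2 * ρ ^ (p - 2) - 1 = 0)
    (hρ'1 : 1 < ρ') (hρ' : ρ' ^ (p - 1) - ρ' ^ (p - 2) - 1 = 0) :
    ρ > ρ' := by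
  obtain ⟨k, rfl⟩ := Nat.exists_eq_add_of_le hp
  rw [show 5 + k - 2 = 3 + k from by omega, show 5 + k = 5 + k from rfl,
    pow_add, pow_add] at hρ
  rw [show 5 + k - 1 = 4 + k from by omega, show 5 + k - 2 = 3 + k from by omega,
    pow_add, pow_add] at hρ'
  have hρpos : (0:ℝ) < ρ := by linarith
  have hρk : (1:ℝ) ≤ ρ ^ k := one_le_pow₀ hρ1.le
  have h2 : ρ ^ 3 * ρ ^ k * (ρ ^ 2 - 2) = 1 := by linear_combination hρ
  have hpos : 0 < ρ ^ 3 * ρ ^ k := by positivity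
  have h3 : 2 < ρ ^ 2 := by nlinarith
  have h4 : (1.41:ℝ) < ρ := by nlinarith
  have h5 : (2.8:ℝ) < ρ ^ 3 := by nlinarith
  have h6 : (2.8:ℝ) < ρ ^ 3 * ρ ^ k := by nlinarith
  have h7 : ρ ^ 2 < ρ + 1 := by nlinarith
  have key : 1 < ρ ^ 3 * ρ ^ k * (ρ - 1) := by nlinarith
  by_contra h
  push_neg at h
  have h1' : ρ' ^ 3 * ρ' ^ k * (ρ' - 1) = 1 := by linear_combination hρ'
  have hmono : ρ ^ 3 * ρ ^ k * (ρ - 1) ≤ ρ' ^ 3 * ρ' ^ k * (ρ' - 1) := by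
    (gcongr)
  linarith
end

section
/- Let p ≥ 3 be an odd integer and let ρ > 1 be a real number satisfying ρ^p − 2ρ^{p−2} − 1 = 0. Define f : ℝ → ℝ by f(z) = ρ·|z| − 1. Then: (1) f([−1,1]) ⊆ [−1,1]; (2) f is Lipschitz with constant ρ on ℝ; and (3) the point 0 is a periodic point of f with minimal period exactly p, i.e., f^p(0) = 0 and f^k(0) ≠ 0 for all 1 ≤ k ≤ p−1. -/
theorem stmt_14 (p : ℕ) (hp : 3 ≤ p) (hodd : Odd p) (ρ : ℝ) (hρ1 : 1 < ρ)
    (hρ : ρ ^ p - 2 * ρ ^ (p - 2) - 1 = 0) :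
    Set.MapsTo (fun z : ℝ => ρ * |z| - 1) (Set.Icc (-1) 1) (Set.Icc (-1) 1) ∧
    (∀ z w : ℝ, |(fun z : ℝ => ρ * |z| - 1) z - (fun z : ℝ => ρ * |z| - 1) w| ≤
      ρ * |z - w|) ∧
    (fun z : ℝ => ρ * |z| - 1)^[p] 0 = 0 ∧
    (∀ k, 1 ≤ k → k ≤ p - 1 → (fun z : ℝ => ρ * |z| - 1)^[k] 0 ≠ 0) := by
  have hρ0 : (0:ℝ) < ρ := by linarith
  set f : ℝ → ℝ := fun z => ρ * |z| - 1 with hf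
  have hppow : ρ ^ p = ρ ^ 2 * ρ ^ (p - 2) := by
    rw [← pow_add]; congr 1; omega
  have hε1 : (ρ ^ 2 - 2) * ρ ^ (p - 2) = 1 := by linear_combination hρ - hppow
  have hpowpos : (0:ℝ) < ρ ^ (p - 2) := pow_pos hρ0 _
  have hε0 : 0 < ρ ^ 2 - 2 := by nlinarith
  have honele : (1:ℝ) ≤ ρ ^ (p - 2) := one_le_pow₀ hρ1.le
  have hρ2 : ρ < 2 := by nlinarith
  have h1 : f^[1] 0 = -1 := by simp [hf]
  have h2 : f^[2] 0 = ρ - 1 := by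
    rw [show (2:ℕ) = 1 + 1 from rfl, Function.iterate_add_apply, h1]
    simp [hf]
  have hlt : ∀ j : ℕ, j + 4 ≤ p →
      (-1:ℝ) ^ j * (ρ ^ 2 - 2) * ρ ^ (j + 1) < 1 := by
    intro j hj
    have hle : ρ ^ (j + 1) ≤ ρ ^ (p - 3) := pow_le_pow_right₀ hρ1.le (by omega)
    have h3 : (ρ ^ 2 - 2) * ρ ^ (p - 3) * ρ = 1 := by
      rw [mul_assoc, ← pow_succ, show p - 3 + 1 = p - 2 by omega]; exact hε1
    have hpos : (0:ℝ) < ρ ^ (j + 1) := pow_pos hρ0 _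
    have hmul : (ρ ^ 2 - 2) * ρ ^ (j + 1) ≤ (ρ ^ 2 - 2) * ρ ^ (p - 3) :=
      mul_le_mul_of_nonneg_left hle hε0.le
    rcases Nat.even_or_odd j with hev | hod
    · rw [hev.neg_one_pow]
      nlinarith [mul_pos hε0 (pow_pos hρ0 (p - 3))]
    · rw [hod.neg_one_pow]
      nlinarith [mul_pos hε0 hpos]
  have key : ∀ j : ℕ, j + 3 ≤ p →
      f^[j + 3] 0 = ((-1) ^ j * (ρ ^ 2 - 2) * ρ ^ (j + 1) - 1) / (1 + ρ) := by
    intro j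
    induction j with
    | zero =>
      intro _
      rw [show (0:ℕ) + 3 = 2 + 1 by rfl, Function.iterate_succ_apply', h2]
      have : |ρ - 1| = ρ - 1 := abs_of_pos (by linarith)
      simp only [hf, this]
      field_simp
      ring
    | succ j ih =>
      intro hj
      have hx := ih (by omega)
      have hxlt := hlt j (by omega)
      have hxneg : f^[j + 3] 0 < 0 := by
        rw [hx]
        apply div_neg_of_neg_of_pos <;> linarith
      rw [show j + 1 + 3 = (j + 3) + 1 by omega, Function.iterate_succ_apply']
      show ρ * |f^[j + 3] 0| - 1 = _
      rw [abs_of_neg hxneg, hx]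
      field_simp
      ring
  refine ⟨?_, ?_, ?_, ?_⟩
  · intro z hz
    simp only [Set.mem_Icc] at hz ⊢
    have h0 : 0 ≤ |z| := abs_nonneg z
    have h1' : |z| ≤ 1 := abs_le.mpr ⟨hz.1, hz.2⟩
    show -1 ≤ ρ * |z| - 1 ∧ ρ * |z| - 1 ≤ 1
    constructor
    · nlinarith [mul_nonneg hρ0.le h0]
    · nlinarith [mul_le_mul_of_nonneg_left h1' hρ0.le]
  · intro z w
    show |(ρ * |z| - 1) - (ρ * |w| - 1)| ≤ ρ * |z - w|
    have h : (ρ * |z| - 1) - (ρ * |w| - 1) = ρ * (|z| - |w|) := by ring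
    rw [h, abs_mul, abs_of_pos hρ0]
    exact mul_le_mul_of_nonneg_left (abs_abs_sub_abs_le_abs_sub z w) hρ0.le
  · have := key (p - 3) (by omega)
    rw [show p - 3 + 3 = p by omega] at this
    rw [this, show p - 3 + 1 = p - 2 by omega]
    have hev : Even (p - 3) := by
      obtain ⟨m, hm⟩ := hodd
      refine ⟨m - 1, by omega⟩
    rw [hev.neg_one_pow]
    rw [one_mul, hε1]
    simp
  · intro k hk1 hk2
    match k, hk1 with
    | 1, _ => rw [h1]; norm_num
    | 2, _ => rw [h2]; intro h; nlinarith
    | (j + 3), _ =>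
      have hx := key j (by omega)
      have hxlt := hlt j (by omega)
      rw [hx]
      intro h
      rw [div_eq_zero_iff] at h
      rcases h with h | h <;> [linarith; linarith]
end

section
/- Let a < b and x₁ < y₁ be reals, and let g : ℝ → ℝ be continuous on [a,b] and cross [x₁,y₁] at least n times on [a,b]. Let f : ℝ → ℝ be continuous on [x₁,y₁], and let x₂, y₂ be reals such that there exist c, d ∈ [x₁,y₁] with f(c) = x₂ and f(d) = y₂. Then the composition f ∘ g crosses [x₂,y₂] at least n times on [a,b]. -/
theorem stmt_15 (a b x₁ y₁ : ℝ) (hab : a < b) (hxy1 : x₁ < y₁) (n : ℕ)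
    (g : ℝ → ℝ) (hg : ContinuousOn g (Set.Icc a b))
    (hcross : CrossesAtLeast g a b x₁ y₁ n)
    (f : ℝ → ℝ) (hf : ContinuousOn f (Set.Icc x₁ y₁))
    (x₂ y₂ : ℝ)
    (hc : ∃ c ∈ Set.Icc x₁ y₁, f c = x₂)
    (hd : ∃ d ∈ Set.Icc x₁ y₁, f d = y₂) :
    CrossesAtLeast (f ∘ g) a b x₂ y₂ n := by
  obtain ⟨u, v, hmem, hsep⟩ := hcross
  obtain ⟨c, hc1, hc2⟩ := hc
  obtain ⟨d, hd1, hd2⟩ := hd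
  have key : ∀ i, i < n → ∃ p q, p ∈ Set.uIcc (u i) (v i) ∧ q ∈ Set.uIcc (u i) (v i)
      ∧ g p = c ∧ g q = d := by
    intro i hi
    obtain ⟨hu, hv, hgu, hgv⟩ := hmem i hi
    have hsub : Set.uIcc (u i) (v i) ⊆ Set.Icc a b := by
      rw [← Set.uIcc_of_le hab.le]
      exact Set.uIcc_subset_uIcc (by rwa [Set.uIcc_of_le hab.le])
        (by rwa [Set.uIcc_of_le hab.le])
    have hcont : ContinuousOn g (Set.uIcc (u i) (v i)) := hg.mono hsub
    have hiv := intermediate_value_uIcc hcont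
    rw [hgu, hgv] at hiv
    have huicc : Set.uIcc x₁ y₁ = Set.Icc x₁ y₁ := Set.uIcc_of_le hxy1.le
    rw [huicc] at hiv
    obtain ⟨p, hp, hgp⟩ := hiv hc1
    obtain ⟨q, hq, hgq⟩ := hiv hd1
    exact ⟨p, q, hp, hq, hgp, hgq⟩
  choose p q hp hq hgp hgq using key
  refine ⟨fun i => if h : i < n then p i h else a,
          fun i => if h : i < n then q i h else a, ?_, ?_⟩
  · intro i hi
    simp only [dif_pos hi]
    obtain ⟨hu, hv, _, _⟩ := hmem i hi
    have hsub : Set.uIcc (u i) (v i) ⊆ Set.Icc a b := by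
      rw [← Set.uIcc_of_le hab.le]
      exact Set.uIcc_subset_uIcc (by rwa [Set.uIcc_of_le hab.le])
        (by rwa [Set.uIcc_of_le hab.le])
    exact ⟨hsub (hp i hi), hsub (hq i hi), by simp [Function.comp, hgp i hi, hc2],
      by simp [Function.comp, hgq i hi, hd2]⟩
  · intro i hi
    have hi' : i < n := by omega
    have hi1 : i + 1 < n := hi
    simp only [dif_pos hi', dif_pos hi1]
    have B : ∀ j (hj : j < n), min (u j) (v j) ≤ p j hj ∧ p j hj ≤ max (u j) (v j)
        ∧ min (u j) (v j) ≤ q j hj ∧ q j hj ≤ max (u j) (v j) := by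
      intro j hj
      have h1 := hp j hj
      have h2 := hq j hj
      simp only [Set.uIcc, Set.mem_Icc] at h1 h2
      exact ⟨h1.1, h1.2, h2.1, h2.2⟩
    obtain ⟨_, b2, _, b4⟩ := B i hi'
    obtain ⟨b1', _, b3', _⟩ := B (i+1) hi1
    calc max (p i hi') (q i hi') ≤ max (u i) (v i) := max_le b2 b4
      _ < min (u (i+1)) (v (i+1)) := hsep i hi
      _ ≤ min (p (i+1) hi1) (q (i+1) hi1) := le_min b1' b3'
end
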